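/- arXiv:2312.15641 — 2 statements merged into one kernel-verified Lean document; each statement's English description precedes it below -/
import Mathlib

section
/- Let b : K → R and d : K → D be injective graph morphisms, and assume the node set and edge set of D are disjoint from those of R. Define H by: V_H = V_D ∪ (V_R \ b_V(V_K)); E_H = E_D ∪ (E_R \ b_E(E_K)); s_H(e) = s_D(e) if e ∈ E_D, s_H(e) = d_V(b_V^{-1}(s_R(e))) if e ∈ E_R \ b_E(E_K) and s_R(e) ∈ b_V(V_K), and s_H(e) = s_R(e) otherwise; t_H is defined analogously from t_D and t_R; l_H(v) = l_D(v) if v ∈ V_D and l_H(v) = l_R(v) otherwise; m_H is defined analogously from m_D and m_R. Then H is a graph, the inclusion D → H (identity on nodes and edges of D) is a graph morphism, and the pair of maps h defined on nodes and edges x of R by h(x) = x if x ∈ R \ b(K) and h(x) = d(b^{-1}(x)) otherwise is an injective graph morphism h : R → H. -/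
/-- A pre-graph over node identifiers `V`, edge identifiers `E`,
node labels `α` and edge labels `β`. -/
structure PreGraph (V E α β : Type) where
  nodes : Set V
  edges : Set E
  src : E → V
  tgt : E → V
  lab : V → α
  mrk : E → β

/-- `G` is a graph: node and edge sets are finite and sources/targets of
edges are nodes. -/
def IsGraph {V E α β : Type} (G : PreGraph V E α β) : Prop :=
  G.nodes.Finite ∧ G.edges.Finite ∧
    (∀ e ∈ G.edges, G.src e ∈ G.nodes) ∧ (∀ e ∈ G.edges, G.tgt e ∈ G.nodes)

/-- A pair of node/edge mappings. -/
structure PreMorph (V1 E1 V2 E2 : Type) where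
  fv : V1 → V2
  fe : E1 → E2

/-- `f` is a graph morphism from `G` to `H`. -/
def IsMorphism {V1 E1 V2 E2 α β : Type} (G : PreGraph V1 E1 α β)
    (H : PreGraph V2 E2 α β) (f : PreMorph V1 E1 V2 E2) : Prop :=
  (∀ v ∈ G.nodes, f.fv v ∈ H.nodes) ∧
  (∀ e ∈ G.edges, f.fe e ∈ H.edges) ∧
  (∀ e ∈ G.edges, f.fv (G.src e) = H.src (f.fe e)) ∧
  (∀ e ∈ G.edges, f.fv (G.tgt e) = H.tgt (f.fe e)) ∧
  (∀ v ∈ G.nodes, G.lab v = H.lab (f.fv v)) ∧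
  (∀ e ∈ G.edges, G.mrk e = H.mrk (f.fe e))

/-- Composition of morphisms, componentwise. -/
def comp {V1 E1 V2 E2 V3 E3 : Type} (g : PreMorph V2 E2 V3 E3)
    (f : PreMorph V1 E1 V2 E2) : PreMorph V1 E1 V3 E3 :=
  ⟨g.fv ∘ f.fv, g.fe ∘ f.fe⟩

/-- Equality of morphisms on the nodes and edges of the source graph `G`. -/
def MorEq {V1 E1 V2 E2 α β : Type} (G : PreGraph V1 E1 α β)
    (f g : PreMorph V1 E1 V2 E2) : Prop :=
  (∀ v ∈ G.nodes, f.fv v = g.fv v) ∧ (∀ e ∈ G.edges, f.fe e = g.fe e)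

/-- `f` is injective on the source graph `G`. -/
def MorInjective {V1 E1 V2 E2 α β : Type} (G : PreGraph V1 E1 α β)
    (f : PreMorph V1 E1 V2 E2) : Prop :=
  Set.InjOn f.fv G.nodes ∧ Set.InjOn f.fe G.edges

/-- `f : G → H` is surjective onto the target graph `H`. -/
def MorSurjective {V1 E1 V2 E2 α β : Type} (G : PreGraph V1 E1 α β)
    (H : PreGraph V2 E2 α β) (f : PreMorph V1 E1 V2 E2) : Prop :=
  (∀ v ∈ H.nodes, ∃ w ∈ G.nodes, f.fv w = v) ∧
  (∀ e ∈ H.edges, ∃ d ∈ G.edges, f.fe d = e)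

/-- `f : G → H` is bijective between the node and edge sets. -/
def MorBijective {V1 E1 V2 E2 α β : Type} (G : PreGraph V1 E1 α β)
    (H : PreGraph V2 E2 α β) (f : PreMorph V1 E1 V2 E2) : Prop :=
  Set.BijOn f.fv G.nodes H.nodes ∧ Set.BijOn f.fe G.edges H.edges

/-- An isomorphism is a bijective morphism. -/
def IsIsomorphism {V1 E1 V2 E2 α β : Type} (G : PreGraph V1 E1 α β)
    (H : PreGraph V2 E2 α β) (f : PreMorph V1 E1 V2 E2) : Prop :=
  IsMorphism G H f ∧ MorBijective G H f

/-- Two graphs are isomorphic if there is an isomorphism between them. -/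
def Isomorphic {V1 E1 V2 E2 α β : Type} (G : PreGraph V1 E1 α β)
    (H : PreGraph V2 E2 α β) : Prop :=
  ∃ f : PreMorph V1 E1 V2 E2, IsIsomorphism G H f

/-- The identity morphism. -/
def idMor (V E : Type) : PreMorph V E V E := ⟨id, id⟩

/-- `D` together with `f : B → D` and `g : C → D` is a pushout of
`b : A → B` and `c : A → C`. -/
def IsPushout {V1 E1 V2 E2 V3 E3 V4 E4 α β : Type}
    (A : PreGraph V1 E1 α β) (B : PreGraph V2 E2 α β)
    (C : PreGraph V3 E3 α β) (D : PreGraph V4 E4 α β)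
    (b : PreMorph V1 E1 V2 E2) (c : PreMorph V1 E1 V3 E3)
    (f : PreMorph V2 E2 V4 E4) (g : PreMorph V3 E3 V4 E4) : Prop :=
  IsMorphism A B b ∧ IsMorphism A C c ∧ IsMorphism B D f ∧ IsMorphism C D g ∧
  MorEq A (comp f b) (comp g c) ∧
  ∀ (V' E' : Type) (D' : PreGraph V' E' α β)
    (p : PreMorph V2 E2 V' E') (t : PreMorph V3 E3 V' E'),
    IsGraph D' → IsMorphism B D' p → IsMorphism C D' t →
    MorEq A (comp p b) (comp t c) →
    ∃ u : PreMorph V4 E4 V' E',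
      IsMorphism D D' u ∧ MorEq B (comp u f) p ∧ MorEq C (comp u g) t ∧
      ∀ u' : PreMorph V4 E4 V' E',
        IsMorphism D D' u' → MorEq B (comp u' f) p → MorEq C (comp u' g) t →
        MorEq D u' u

/-- `A` together with `b : A → B` and `c : A → C` is a pullback of
`f : B → D` and `g : C → D`. -/
def IsPullback {V1 E1 V2 E2 V3 E3 V4 E4 α β : Type}
    (A : PreGraph V1 E1 α β) (B : PreGraph V2 E2 α β)
    (C : PreGraph V3 E3 α β) (D : PreGraph V4 E4 α β)
    (b : PreMorph V1 E1 V2 E2) (c : PreMorph V1 E1 V3 E3)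
    (f : PreMorph V2 E2 V4 E4) (g : PreMorph V3 E3 V4 E4) : Prop :=
  IsMorphism A B b ∧ IsMorphism A C c ∧ IsMorphism B D f ∧ IsMorphism C D g ∧
  MorEq A (comp f b) (comp g c) ∧
  ∀ (V' E' : Type) (A' : PreGraph V' E' α β)
    (p : PreMorph V' E' V2 E2) (t : PreMorph V' E' V3 E3),
    IsGraph A' → IsMorphism A' B p → IsMorphism A' C t →
    MorEq A' (comp f p) (comp g t) →
    ∃ u : PreMorph V' E' V1 E1,
      IsMorphism A' A u ∧ MorEq A' (comp b u) p ∧ MorEq A' (comp c u) t ∧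
      ∀ u' : PreMorph V' E' V1 E1,
        IsMorphism A' A u' → MorEq A' (comp b u') p → MorEq A' (comp c u') t →
        MorEq A' u' u

open Classical

/-- The gluing of `D` and `R` along `K` via `b : K → R` and `d : K → D`. -/
noncomputable def glueGraph {VK EK V E α β : Type}
    (K : PreGraph VK EK α β) (R D : PreGraph V E α β)
    (b d : PreMorph VK EK V E) : PreGraph V E α β where
  nodes := D.nodes ∪ (R.nodes \ (b.fv '' K.nodes))
  edges := D.edges ∪ (R.edges \ (b.fe '' K.edges))
  src e :=
    if e ∈ D.edges then D.src e
    else if h : e ∈ R.edges \ (b.fe '' K.edges) ∧ R.src e ∈ b.fv '' K.nodes then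
      d.fv h.2.choose
    else R.src e
  tgt e :=
    if e ∈ D.edges then D.tgt e
    else if h : e ∈ R.edges \ (b.fe '' K.edges) ∧ R.tgt e ∈ b.fv '' K.nodes then
      d.fv h.2.choose
    else R.tgt e
  lab v := if v ∈ D.nodes then D.lab v else R.lab v
  mrk e := if e ∈ D.edges then D.mrk e else R.mrk e

/-- The morphism `h : R → H`: identity on `R \ b(K)`, and `d ∘ b⁻¹` on the
image of `K` under `b`. -/
noncomputable def glueMorph {VK EK V E α β : Type}
    (K : PreGraph VK EK α β) (R : PreGraph V E α β)
    (b d : PreMorph VK EK V E) : PreMorph V E V E where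
  fv x :=
    if x ∈ R.nodes \ (b.fv '' K.nodes) then x
    else if h : x ∈ b.fv '' K.nodes then d.fv h.choose
    else x
  fe x :=
    if x ∈ R.edges \ (b.fe '' K.edges) then x
    else if h : x ∈ b.fe '' K.edges then d.fe h.choose
    else x

/-!
On nodes and on edges separately, `h` is the set-level gluing map `glueMap`: the identity
off `b(K)` and `d ∘ b⁻¹` on `b(K)`. Every claim is a case split on whether an item of `R`
lies in `b(K)`. Inside, the morphism conditions of `b` and then `d` transport it through `K`
into `D`; outside, `h` is the identity and, `D` and `R` being disjoint, `H` agrees with `R`.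
-/

open Set

section GlueMap

variable {X Y : Type} {XR XD : Set X} {A : Set Y} {f g : Y → X}

variable (XR A f g) in
noncomputable def glueMap (x : X) : X :=
  if x ∈ XR \ f '' A then x else if h : x ∈ f '' A then g h.choose else x

theorem glueMap_of_mem {x : X} (hx : x ∈ f '' A) : glueMap XR A f g x = g hx.choose := by
  rw [glueMap, if_neg fun h => h.2 hx, dif_pos hx]

theorem glueMap_of_notMem {x : X} (hx : x ∉ f '' A) : glueMap XR A f g x = x := by
  unfold glueMap
  split_ifs <;> rfl

variable (XR A f g) in
theorem glueMap_cases (x : X) :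
    (∃ a ∈ A, f a = x ∧ glueMap XR A f g x = g a) ∨
      (x ∉ f '' A ∧ glueMap XR A f g x = x) := by
  by_cases hx : x ∈ f '' A
  · exact Or.inl ⟨hx.choose, hx.choose_spec.1, hx.choose_spec.2, glueMap_of_mem hx⟩
  · exact Or.inr ⟨hx, glueMap_of_notMem hx⟩

theorem glueMap_apply (hf : InjOn f A) {a : Y} (ha : a ∈ A) :
    glueMap XR A f g (f a) = g a := by
  have hfa : f a ∈ f '' A := mem_image_of_mem f ha
  obtain ⟨hA, hf_eq⟩ := hfa.choose_spec
  rw [glueMap_of_mem hfa, hf hA ha hf_eq]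

theorem mapsTo_glueMap (hg : MapsTo g A XD) :
    MapsTo (glueMap XR A f g) XR (XD ∪ XR \ f '' A) := by
  intro x hx
  rcases glueMap_cases XR A f g x with ⟨a, ha, -, hx'⟩ | ⟨hxA, hx'⟩
  · rw [hx']
    exact Or.inl (hg ha)
  · rw [hx']
    exact Or.inr ⟨hx, hxA⟩

theorem injOn_glueMap (hg : MapsTo g A XD) (hgi : InjOn g A) (hdisj : Disjoint XD XR) :
    InjOn (glueMap XR A f g) XR := by
  intro x hx y hy hxy
  rcases glueMap_cases XR A f g x with ⟨a, ha, rfl, hx'⟩ | ⟨-, hx'⟩ <;>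
  rcases glueMap_cases XR A f g y with ⟨a', ha', rfl, hy'⟩ | ⟨-, hy'⟩ <;>
  rw [hx', hy'] at hxy
  · rw [hgi ha ha' hxy]
  · exact absurd hy (disjoint_left.mp hdisj (hxy ▸ hg ha))
  · exact absurd hx (disjoint_left.mp hdisj (hxy ▸ hg ha'))
  · exact hxy

theorem piecewise_glueMap {L : Type} {lK : Y → L} {lR lD : X → L} (hg : MapsTo g A XD)
    (hdisj : Disjoint XD XR) (hf_lab : ∀ a ∈ A, lK a = lR (f a))
    (hg_lab : ∀ a ∈ A, lK a = lD (g a)) {x : X} (hx : x ∈ XR) :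
    lR x = XD.piecewise lD lR (glueMap XR A f g x) := by
  rcases glueMap_cases XR A f g x with ⟨a, ha, rfl, hx'⟩ | ⟨-, hx'⟩
  · rw [hx', piecewise_eq_of_mem _ _ _ (hg ha), ← hf_lab a ha, hg_lab a ha]
  · rw [hx', piecewise_eq_of_notMem _ _ _ (disjoint_right.mp hdisj hx)]

end GlueMap

section Gluing

variable {VK EK V E α β : Type} (K : PreGraph VK EK α β) (R D : PreGraph V E α β)
  (b d : PreMorph VK EK V E)

noncomputable def glueEndpoint (sR sD : E → V) (e : E) : V :=
  if e ∈ D.edges then sD e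
  else if h : e ∈ R.edges \ (b.fe '' K.edges) ∧ sR e ∈ b.fv '' K.nodes then d.fv h.2.choose
  else sR e

theorem glueGraph_src : (glueGraph K R D b d).src = glueEndpoint K R D b d R.src D.src := rfl

theorem glueGraph_tgt : (glueGraph K R D b d).tgt = glueEndpoint K R D b d R.tgt D.tgt := rfl

theorem glueGraph_lab : (glueGraph K R D b d).lab = D.nodes.piecewise D.lab R.lab := rfl

theorem glueGraph_mrk : (glueGraph K R D b d).mrk = D.edges.piecewise D.mrk R.mrk := rfl

theorem glueMorph_fv : (glueMorph K R b d).fv = glueMap R.nodes K.nodes b.fv d.fv := rfl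

theorem glueMorph_fe : (glueMorph K R b d).fe = glueMap R.edges K.edges b.fe d.fe := rfl

variable {K R D b d}

theorem glueEndpoint_of_mem_left {sR sD : E → V} {e : E} (he : e ∈ D.edges) :
    glueEndpoint K R D b d sR sD e = sD e :=
  if_pos he

theorem glueEndpoint_of_mem_right {sR sD : E → V} {e : E} (heD : e ∉ D.edges)
    (he : e ∈ R.edges \ b.fe '' K.edges) :
    glueEndpoint K R D b d sR sD e = glueMap R.nodes K.nodes b.fv d.fv (sR e) := by
  rw [glueEndpoint, if_neg heD]
  by_cases hs : sR e ∈ b.fv '' K.nodes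
  · rw [dif_pos ⟨he, hs⟩, glueMap_of_mem hs]
  · rw [dif_neg fun h => hs h.2, glueMap_of_notMem hs]

theorem mapsTo_glueEndpoint {sR sD : E → V} (hsR : MapsTo sR R.edges R.nodes)
    (hsD : MapsTo sD D.edges D.nodes) (hdV : MapsTo d.fv K.nodes D.nodes)
    (hdisjE : Disjoint D.edges R.edges) :
    MapsTo (glueEndpoint K R D b d sR sD) (glueGraph K R D b d).edges
      (glueGraph K R D b d).nodes := by
  rintro e (he | he)
  · rw [glueEndpoint_of_mem_left he]
    exact Or.inl (hsD he)
  · rw [glueEndpoint_of_mem_right (disjoint_right.mp hdisjE he.1) he]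
    exact mapsTo_glueMap hdV (hsR he.1)

theorem glueMap_endpoint {sK : EK → VK} {sR sD : E → V} (hsK : MapsTo sK K.edges K.nodes)
    (hbi : InjOn b.fv K.nodes) (hb : ∀ k ∈ K.edges, b.fv (sK k) = sR (b.fe k))
    (hd : ∀ k ∈ K.edges, d.fv (sK k) = sD (d.fe k)) (hdE : MapsTo d.fe K.edges D.edges)
    (hdisjE : Disjoint D.edges R.edges) {e : E} (he : e ∈ R.edges) :
    glueMap R.nodes K.nodes b.fv d.fv (sR e) =
      glueEndpoint K R D b d sR sD (glueMap R.edges K.edges b.fe d.fe e) := by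
  rcases glueMap_cases R.edges K.edges b.fe d.fe e with ⟨k, hk, rfl, he'⟩ | ⟨heK, he'⟩
  · rw [he', ← hb k hk, glueMap_apply hbi (hsK hk), glueEndpoint_of_mem_left (hdE hk), hd k hk]
  · rw [he', glueEndpoint_of_mem_right (disjoint_right.mp hdisjE he) ⟨he, heK⟩]

theorem isGraph_glueGraph (hR : IsGraph R) (hD : IsGraph D)
    (hdV : MapsTo d.fv K.nodes D.nodes) (hdisjE : Disjoint D.edges R.edges) :
    IsGraph (glueGraph K R D b d) := by
  obtain ⟨hRV, hRE, hRs, hRt⟩ := hR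
  obtain ⟨hDV, hDE, hDs, hDt⟩ := hD
  exact ⟨hDV.union (hRV.subset sdiff_subset), hDE.union (hRE.subset sdiff_subset),
    mapsTo_glueEndpoint hRs hDs hdV hdisjE, mapsTo_glueEndpoint hRt hDt hdV hdisjE⟩

theorem isMorphism_idMor_glueGraph : IsMorphism D (glueGraph K R D b d) (idMor V E) :=
  ⟨fun _ hv => Or.inl hv, fun _ he => Or.inl he,
    fun _ he => (glueEndpoint_of_mem_left he).symm,
    fun _ he => (glueEndpoint_of_mem_left he).symm,
    fun _ hv => (piecewise_eq_of_mem _ _ _ hv).symm,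
    fun _ he => (piecewise_eq_of_mem _ _ _ he).symm⟩

theorem isMorphism_glueMorph (hKs : MapsTo K.src K.edges K.nodes)
    (hKt : MapsTo K.tgt K.edges K.nodes) (hb : IsMorphism K R b) (hbi : InjOn b.fv K.nodes)
    (hd : IsMorphism K D d) (hdisjV : Disjoint D.nodes R.nodes)
    (hdisjE : Disjoint D.edges R.edges) :
    IsMorphism R (glueGraph K R D b d) (glueMorph K R b d) := by
  obtain ⟨-, -, hbs, hbt, hbl, hbm⟩ := hb
  obtain ⟨hdV, hdE, hds, hdt, hdl, hdm⟩ := hd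
  exact ⟨fun _ hv => mapsTo_glueMap hdV hv, fun _ he => mapsTo_glueMap hdE he,
    fun _ he => glueMap_endpoint hKs hbi hbs hds hdE hdisjE he,
    fun _ he => glueMap_endpoint hKt hbi hbt hdt hdE hdisjE he,
    fun _ hv => piecewise_glueMap hdV hdisjV hbl hdl hv,
    fun _ he => piecewise_glueMap hdE hdisjE hbm hdm he⟩

theorem morInjective_glueMorph (hd : IsMorphism K D d) (hdi : MorInjective K d)
    (hdisjV : Disjoint D.nodes R.nodes) (hdisjE : Disjoint D.edges R.edges) :
    MorInjective R (glueMorph K R b d) :=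
  ⟨injOn_glueMap hd.1 hdi.1 hdisjV, injOn_glueMap hd.2.1 hdi.2 hdisjE⟩

end Gluing

/-- the gluing construction yields a graph `H`, the inclusion
`D → H` is a morphism, and `h : R → H` is an injective morphism. -/
theorem gluing {VK EK V E α β : Type}
    (K : PreGraph VK EK α β) (R D : PreGraph V E α β)
    (b d : PreMorph VK EK V E)
    (hK : IsGraph K) (hR : IsGraph R) (hD : IsGraph D)
    (hb : IsMorphism K R b) (hbi : MorInjective K b)
    (hd : IsMorphism K D d) (hdi : MorInjective K d)
    (hdisjV : Disjoint D.nodes R.nodes) (hdisjE : Disjoint D.edges R.edges) :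
    IsGraph (glueGraph K R D b d) ∧
    IsMorphism D (glueGraph K R D b d) (idMor V E) ∧
    IsMorphism R (glueGraph K R D b d) (glueMorph K R b d) ∧
    MorInjective R (glueMorph K R b d) := by
  obtain ⟨-, -, hKs, hKt⟩ := hK
  exact ⟨isGraph_glueGraph hR hD hd.1 hdisjE, isMorphism_idMor_glueGraph,
    isMorphism_glueMorph hKs hKt hb hbi.1 hd hdisjV hdisjE,
    morInjective_glueMorph hd hdi hdisjV hdisjE⟩
end

section
/- Let p1 = ⟨L1 ← K1 → R1⟩ and p2 = ⟨L2 ← K2 → R2⟩ be rules, and let G ⇒_{p1,m1} H1 and G ⇒_{p2,m2} H2 be parallel independent direct derivations (with injective matches m1 : L1 → G and m2 : L2 → G and context graphs D1 and D2). Then there exist a graph G' and injective matches m2' : L2 → H1 and m1' : L1 → H2 together with direct derivations H1 ⇒_{p2,m2'} G' and H2 ⇒_{p1,m1'} G' such that the derivation sequences G ⇒_{p1,m1} H1 ⇒_{p2,m2'} G' and G ⇒_{p2,m2} H2 ⇒_{p1,m1'} G' are each sequentially independent. -/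
/-- A direct derivation `G ⇒ H` via rule `⟨L ← K → R⟩` (with `bl : K → L`,
`br : K → R`), match `m : L → G`, context `D` with `k : K → D`,
`dG : D → G`, `dH : D → H` and comatch `r : R → H`: both squares are pushouts. -/
def IsDirectDerivation
    {Vl El Vk Ek Vr Er Vg Eg Vd Ed Vh Eh α β : Type}
    (L : PreGraph Vl El α β) (K : PreGraph Vk Ek α β) (R : PreGraph Vr Er α β)
    (G : PreGraph Vg Eg α β) (D : PreGraph Vd Ed α β) (H : PreGraph Vh Eh α β)
    (bl : PreMorph Vk Ek Vl El) (br : PreMorph Vk Ek Vr Er)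
    (m : PreMorph Vl El Vg Eg) (k : PreMorph Vk Ek Vd Ed)
    (dG : PreMorph Vd Ed Vg Eg) (dH : PreMorph Vd Ed Vh Eh)
    (r : PreMorph Vr Er Vh Eh) : Prop :=
  IsPushout K L D G bl k m dG ∧ IsPushout K R D H br k r dH


/-!
A pushout along injective morphisms can be described elementwise: both legs are injective,
their images cover the pushout object and meet exactly in the image of the interface. With
this description the classical construction goes through. Let `D = D₁ ×_G D₂` be the common
part of the two contexts and let `G'` be obtained from `D` by gluing in `R₁` along `K₁` and
`R₂` along `K₂`. Since `m₂ = d₁G ∘ j₂` lands in `D₁`, the first result `H₁ = R₁ +_{K₁} D₁`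
splits as `L₂ +_{K₂} C₂` with `C₂ = R₁ +_{K₁} D`, and `G' = R₂ +_{K₂} C₂`; this is the
derivation `H₁ ⇒ G'` at the match `d₁H ∘ j₂`, sequentially independent via `R₁ → C₂` and
`j₂`. Exchanging the two rules gives `H₂ ⇒ G'`.

The universal property quantifies over graphs on arbitrary, possibly empty, carrier types, so
the carriers of `C₂` and `G'` are built from those of `R₁`, `R₂` and `D` alone.
-/

open Set

section SetPushout

variable {X Y Z W T : Type}

/-- The elementwise form of a pushout of injections, restricted to the given subsets. -/
structure IsSetPushout (A : Set X) (B : Set Y) (C : Set Z) (D : Set W)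
    (b : X → Y) (c : X → Z) (f : Y → W) (g : Z → W) : Prop where
  mapsTo_b : MapsTo b A B
  mapsTo_c : MapsTo c A C
  mapsTo_f : MapsTo f B D
  mapsTo_g : MapsTo g C D
  comm : EqOn (f ∘ b) (g ∘ c) A
  injOn_b : InjOn b A
  injOn_c : InjOn c A
  injOn_f : InjOn f B
  injOn_g : InjOn g C
  subset_union : D ⊆ f '' B ∪ g '' C
  exists_of_eq : ∀ x ∈ B, ∀ y ∈ C, f x = g y → ∃ a ∈ A, b a = x ∧ c a = y

namespace IsSetPushout

variable {A : Set X} {B : Set Y} {C : Set Z} {D : Set W}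
  {b : X → Y} {c : X → Z} {f : Y → W} {g : Z → W}

theorem eqOn_of_comp (h : IsSetPushout A B C D b c f g) {u u' : W → T}
    (hf : EqOn (u ∘ f) (u' ∘ f) B) (hg : EqOn (u ∘ g) (u' ∘ g) C) : EqOn u u' D := by
  intro w hw
  rcases h.subset_union hw with ⟨x, hx, rfl⟩ | ⟨y, hy, rfl⟩
  exacts [hf hx, hg hy]

theorem injOn_of_comp (h : IsSetPushout A B C D b c f g) {u : W → T}
    (hf : InjOn (u ∘ f) B) (hg : InjOn (u ∘ g) C)
    (hfg : ∀ x ∈ B, ∀ y ∈ C, u (f x) = u (g y) → f x = g y) : InjOn u D := by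
  intro w hw w' hw' heq
  rcases h.subset_union hw with ⟨x, hx, rfl⟩ | ⟨y, hy, rfl⟩ <;>
    rcases h.subset_union hw' with ⟨x', hx', rfl⟩ | ⟨y', hy', rfl⟩
  · rw [hf hx hx' heq]
  · exact hfg x hx y' hy' heq
  · exact (hfg x' hx' y hy heq.symm).symm
  · rw [hg hy hy' heq]

/-- `hn` is needed because `u` is a total function on the carrier `W`: if the carriers of `B`
and `C` are empty but `W` is not, there is no map from `W` into an empty carrier. -/
theorem exists_desc (h : IsSetPushout A B C D b c f g) {p : Y → T} {t : Z → T}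
    (hpt : EqOn (p ∘ b) (t ∘ c) A) (hn : Nonempty W → Nonempty Y ∨ Nonempty Z) :
    ∃ u : W → T, EqOn (u ∘ f) p B ∧ EqOn (u ∘ g) t C := by
  classical
  have hT : W → Nonempty T := fun w =>
    (hn ⟨w⟩).elim (fun ⟨y⟩ => ⟨p y⟩) (fun ⟨z⟩ => ⟨t z⟩)
  refine ⟨fun w => if hw : ∃ x ∈ B, f x = w then p hw.choose
    else if hw' : ∃ y ∈ C, g y = w then t hw'.choose else (hT w).some, ?_, ?_⟩
  · intro x hx
    have hw : ∃ x' ∈ B, f x' = f x := ⟨x, hx, rfl⟩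
    simp only [Function.comp, dif_pos hw]
    rw [h.injOn_f hw.choose_spec.1 hx hw.choose_spec.2]
  · intro y hy
    have hw' : ∃ y' ∈ C, g y' = g y := ⟨y, hy, rfl⟩
    simp only [Function.comp]
    split_ifs with hw
    · obtain ⟨a, ha, hba, rfl⟩ := h.exists_of_eq _ hw.choose_spec.1 y hy hw.choose_spec.2
      rw [← hba]
      exact hpt ha
    · rw [h.injOn_g hw'.choose_spec.1 hy hw'.choose_spec.2]

theorem of_comp {P : Set T} {f' : Y → T} {g' : Z → T} (hP : IsSetPushout A B C P b c f' g')
    (hf : MapsTo f B D) (hg : MapsTo g C D) (hcomm : EqOn (f ∘ b) (g ∘ c) A)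
    (hcov : D ⊆ f '' B ∪ g '' C) {u : W → T}
    (hu₁ : EqOn (u ∘ f) f' B) (hu₂ : EqOn (u ∘ g) g' C) : IsSetPushout A B C D b c f g where
  mapsTo_b := hP.mapsTo_b
  mapsTo_c := hP.mapsTo_c
  mapsTo_f := hf
  mapsTo_g := hg
  comm := hcomm
  injOn_b := hP.injOn_b
  injOn_c := hP.injOn_c
  injOn_f := (hP.injOn_f.congr hu₁.symm).of_comp
  injOn_g := (hP.injOn_g.congr hu₂.symm).of_comp
  subset_union := hcov
  exists_of_eq x hx y hy hxy :=
    hP.exists_of_eq x hx y hy (by rw [← hu₁ hx, ← hu₂ hy]; exact congrArg u hxy)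

end IsSetPushout

open Classical in
noncomputable def glue (A : Set X) (b : X → Y) (c : X → Z) (y : Y) : Y ⊕ Z :=
  if h : ∃ a ∈ A, b a = y then Sum.inr (c h.choose) else Sum.inl y

section Glue

variable {A : Set X} {b : X → Y} {c : X → Z}

theorem glue_apply_of_mem (hb : InjOn b A) {a : X} (ha : a ∈ A) :
    glue A b c (b a) = Sum.inr (c a) := by
  have h : ∃ a' ∈ A, b a' = b a := ⟨a, ha, rfl⟩
  rw [glue, dif_pos h, hb h.choose_spec.1 ha h.choose_spec.2]

theorem glue_apply_of_not_mem {y : Y} (h : ¬∃ a ∈ A, b a = y) : glue A b c y = Sum.inl y := by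
  rw [glue, dif_neg h]

theorem exists_of_glue_eq_inr {y : Y} {z : Z} (h : glue A b c y = Sum.inr z) :
    ∃ a ∈ A, b a = y ∧ c a = z := by
  by_cases hy : ∃ a ∈ A, b a = y
  · rw [glue, dif_pos hy, Sum.inr.injEq] at h
    exact ⟨hy.choose, hy.choose_spec.1, hy.choose_spec.2, h⟩
  · rw [glue_apply_of_not_mem hy] at h
    cases h

theorem isSetPushout_glue {B : Set Y} {C : Set Z} (hb : MapsTo b A B) (hc : MapsTo c A C)
    (hbi : InjOn b A) (hci : InjOn c A) :
    IsSetPushout A B C (glue A b c '' B ∪ Sum.inr '' C) b c (glue A b c) Sum.inr where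
  mapsTo_b := hb
  mapsTo_c := hc
  mapsTo_f := fun _ hx => Or.inl (mem_image_of_mem _ hx)
  mapsTo_g := fun _ hy => Or.inr (mem_image_of_mem _ hy)
  comm := fun _ ha => glue_apply_of_mem hbi ha
  injOn_b := hbi
  injOn_c := hci
  injOn_f := by
    intro x _ x' _ heq
    by_cases hx : ∃ a ∈ A, b a = x <;> by_cases hx' : ∃ a ∈ A, b a = x'
    · obtain ⟨a, ha, rfl⟩ := hx
      obtain ⟨a', ha', rfl⟩ := hx'
      rw [glue_apply_of_mem hbi ha, glue_apply_of_mem hbi ha', Sum.inr.injEq] at heq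
      rw [hci ha ha' heq]
    · obtain ⟨a, ha, rfl⟩ := hx
      rw [glue_apply_of_mem hbi ha, glue_apply_of_not_mem hx'] at heq
      cases heq
    · obtain ⟨a', ha', rfl⟩ := hx'
      rw [glue_apply_of_not_mem hx, glue_apply_of_mem hbi ha'] at heq
      cases heq
    · rwa [glue_apply_of_not_mem hx, glue_apply_of_not_mem hx', Sum.inl.injEq] at heq
  injOn_g := Sum.inr_injective.injOn
  subset_union := subset_rfl
  exists_of_eq _ _ _ _ h := exists_of_glue_eq_inr h

end Glue

end SetPushout

section Gluing

variable {X Y Z W T : Type}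

structure IsSetPullback (P : Set X) (B : Set Y) (C : Set Z)
    (p : X → Y) (q : X → Z) (f : Y → W) (g : Z → W) : Prop where
  mapsTo_p : MapsTo p P B
  mapsTo_q : MapsTo q P C
  comm : EqOn (f ∘ p) (g ∘ q) P
  ext : ∀ x ∈ P, ∀ x' ∈ P, p x = p x' → q x = q x' → x = x'
  exists_of_eq : ∀ y ∈ B, ∀ z ∈ C, f y = g z → ∃ x ∈ P, p x = y ∧ q x = z

namespace IsSetPullback

variable {P : Set X} {B : Set Y} {C : Set Z}
  {p : X → Y} {q : X → Z} {f : Y → W} {g : Z → W}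

theorem symm (h : IsSetPullback P B C p q f g) : IsSetPullback P C B q p g f where
  mapsTo_p := h.mapsTo_q
  mapsTo_q := h.mapsTo_p
  comm := h.comm.symm
  ext x hx x' hx' hq hp := h.ext x hx x' hx' hp hq
  exists_of_eq z hz y hy hzy :=
    (h.exists_of_eq y hy z hz hzy.symm).imp fun _ ⟨hx, hp, hq⟩ => ⟨hx, hq, hp⟩

theorem injOn_p (h : IsSetPullback P B C p q f g) (hg : InjOn g C) : InjOn p P :=
  fun x hx x' hx' hp => h.ext x hx x' hx' hp <|
    hg (h.mapsTo_q hx) (h.mapsTo_q hx')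
      ((h.comm hx).symm.trans ((congrArg f hp).trans (h.comm hx')))

end IsSetPullback

variable {Y₁ Y₂ Z₁ Z₂ : Type}

/-- `U` is the colimit of the injections `R₁ ← K₁ → D ← K₂ → R₂`, stated elementwise. -/
structure IsDoubleGluing (D : Set X) (K₁ : Set Y₁) (R₁ : Set Z₁) (K₂ : Set Y₂) (R₂ : Set Z₂)
    (U : Set W) (κ₁ : Y₁ → X) (b₁ : Y₁ → Z₁) (κ₂ : Y₂ → X) (b₂ : Y₂ → Z₂)
    (γ : X → W) (ρ₁ : Z₁ → W) (ρ₂ : Z₂ → W) : Prop where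
  mapsTo_γ : MapsTo γ D U
  mapsTo_ρ₁ : MapsTo ρ₁ R₁ U
  mapsTo_ρ₂ : MapsTo ρ₂ R₂ U
  injOn_γ : InjOn γ D
  injOn_ρ₁ : InjOn ρ₁ R₁
  injOn_ρ₂ : InjOn ρ₂ R₂
  comm₁ : EqOn (ρ₁ ∘ b₁) (γ ∘ κ₁) K₁
  comm₂ : EqOn (ρ₂ ∘ b₂) (γ ∘ κ₂) K₂
  exists_of_eq₁ : ∀ x ∈ R₁, ∀ y ∈ D, ρ₁ x = γ y → ∃ a ∈ K₁, b₁ a = x ∧ κ₁ a = y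
  exists_of_eq₂ : ∀ x ∈ R₂, ∀ y ∈ D, ρ₂ x = γ y → ∃ a ∈ K₂, b₂ a = x ∧ κ₂ a = y
  exists_of_eq₁₂ : ∀ x ∈ R₁, ∀ x' ∈ R₂, ρ₁ x = ρ₂ x' → ∃ y ∈ D, γ y = ρ₁ x
  subset_union : U ⊆ γ '' D ∪ ρ₁ '' R₁ ∪ ρ₂ '' R₂

variable {D : Set X} {K₁ : Set Y₁} {R₁ : Set Z₁} {K₂ : Set Y₂} {R₂ : Set Z₂} {U : Set W}
  {κ₁ : Y₁ → X} {b₁ : Y₁ → Z₁} {κ₂ : Y₂ → X} {b₂ : Y₂ → Z₂}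
  {γ : X → W} {ρ₁ : Z₁ → W} {ρ₂ : Z₂ → W} {C : Set T} {σ : Z₁ → T} {τ : X → T}

theorem IsDoubleGluing.symm (h : IsDoubleGluing D K₁ R₁ K₂ R₂ U κ₁ b₁ κ₂ b₂ γ ρ₁ ρ₂) :
    IsDoubleGluing D K₂ R₂ K₁ R₁ U κ₂ b₂ κ₁ b₁ γ ρ₂ ρ₁ where
  mapsTo_γ := h.mapsTo_γ
  mapsTo_ρ₁ := h.mapsTo_ρ₂
  mapsTo_ρ₂ := h.mapsTo_ρ₁
  injOn_γ := h.injOn_γ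
  injOn_ρ₁ := h.injOn_ρ₂
  injOn_ρ₂ := h.injOn_ρ₁
  comm₁ := h.comm₂
  comm₂ := h.comm₁
  exists_of_eq₁ := h.exists_of_eq₂
  exists_of_eq₂ := h.exists_of_eq₁
  exists_of_eq₁₂ x hx x' hx' hxx' := by
    obtain ⟨y, hy, hγy⟩ := h.exists_of_eq₁₂ x' hx' x hx hxx'.symm
    exact ⟨y, hy, hγy.trans hxx'.symm⟩
  subset_union w hw := by
    rcases h.subset_union hw with (hw | hw) | hw
    exacts [Or.inl (Or.inl hw), Or.inr hw, Or.inl (Or.inr hw)]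

theorem IsSetPushout.isDoubleGluing {f : Z₂ → W} {g : T → W}
    (h₁ : IsSetPushout K₁ R₁ D C b₁ κ₁ σ τ) (h₂ : IsSetPushout K₂ R₂ C U b₂ (τ ∘ κ₂) f g)
    (hκ₂ : MapsTo κ₂ K₂ D) :
    IsDoubleGluing D K₁ R₁ K₂ R₂ U κ₁ b₁ κ₂ b₂ (g ∘ τ) (g ∘ σ) f where
  mapsTo_γ := h₂.mapsTo_g.comp h₁.mapsTo_g
  mapsTo_ρ₁ := h₂.mapsTo_g.comp h₁.mapsTo_f
  mapsTo_ρ₂ := h₂.mapsTo_f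
  injOn_γ := h₂.injOn_g.comp h₁.injOn_g h₁.mapsTo_g
  injOn_ρ₁ := h₂.injOn_g.comp h₁.injOn_f h₁.mapsTo_f
  injOn_ρ₂ := h₂.injOn_f
  comm₁ _ ha := congrArg g (h₁.comm ha)
  comm₂ := h₂.comm
  exists_of_eq₁ x hx y hy hxy :=
    h₁.exists_of_eq x hx y hy (h₂.injOn_g (h₁.mapsTo_f hx) (h₁.mapsTo_g hy) hxy)
  exists_of_eq₂ x hx y hy hxy := by
    obtain ⟨a, ha, hba, hκa⟩ := h₂.exists_of_eq x hx (τ y) (h₁.mapsTo_g hy) hxy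
    exact ⟨a, ha, hba, h₁.injOn_g (hκ₂ ha) hy hκa⟩
  exists_of_eq₁₂ x hx x' hx' hxx' := by
    obtain ⟨a, ha, -, hκa⟩ := h₂.exists_of_eq x' hx' (σ x) (h₁.mapsTo_f hx) hxx'.symm
    exact ⟨κ₂ a, hκ₂ ha, congrArg g hκa⟩
  subset_union w hw := by
    rcases h₂.subset_union hw with ⟨x', hx', rfl⟩ | ⟨z, hz, rfl⟩
    · exact Or.inr ⟨x', hx', rfl⟩
    rcases h₁.subset_union hz with ⟨x, hx, rfl⟩ | ⟨y, hy, rfl⟩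
    exacts [Or.inl (Or.inr ⟨x, hx, rfl⟩), Or.inl (Or.inl ⟨y, hy, rfl⟩)]

theorem IsDoubleGluing.isSetPushout (hU : IsDoubleGluing D K₁ R₁ K₂ R₂ U κ₁ b₁ κ₂ b₂ γ ρ₁ ρ₂)
    (hC : IsSetPushout K₁ R₁ D C b₁ κ₁ σ τ) (hb₂ : MapsTo b₂ K₂ R₂) (hb₂i : InjOn b₂ K₂)
    (hκ₂ : MapsTo κ₂ K₂ D) (hκ₂i : InjOn κ₂ K₂) {u : T → W}
    (hσ : EqOn (u ∘ σ) ρ₁ R₁) (hτ : EqOn (u ∘ τ) γ D) :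
    IsSetPushout K₂ R₂ C U b₂ (τ ∘ κ₂) ρ₂ u where
  mapsTo_b := hb₂
  mapsTo_c := hC.mapsTo_g.comp hκ₂
  mapsTo_f := hU.mapsTo_ρ₂
  mapsTo_g z hz := by
    rcases hC.subset_union hz with ⟨x, hx, rfl⟩ | ⟨y, hy, rfl⟩
    · rw [← Function.comp_apply (f := u), hσ hx]
      exact hU.mapsTo_ρ₁ hx
    · rw [← Function.comp_apply (f := u), hτ hy]
      exact hU.mapsTo_γ hy
  comm _ ha := (hU.comm₂ ha).trans (hτ (hκ₂ ha)).symm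
  injOn_b := hb₂i
  injOn_c := hC.injOn_g.comp hκ₂i hκ₂
  injOn_f := hU.injOn_ρ₂
  injOn_g := by
    refine hC.injOn_of_comp (hU.injOn_ρ₁.congr hσ.symm) (hU.injOn_γ.congr hτ.symm) ?_
    intro x hx y hy hxy
    obtain ⟨a, ha, rfl, rfl⟩ :=
      hU.exists_of_eq₁ x hx y hy ((hσ hx).symm.trans (hxy.trans (hτ hy)))
    exact hC.comm ha
  subset_union w hw := by
    rcases hU.subset_union hw with (⟨y, hy, rfl⟩ | ⟨x, hx, rfl⟩) | hw
    · exact Or.inr ⟨τ y, hC.mapsTo_g hy, hτ hy⟩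
    · exact Or.inr ⟨σ x, hC.mapsTo_f hx, hσ hx⟩
    · exact Or.inl hw
  exists_of_eq x hx z hz hxz := by
    rcases hC.subset_union hz with ⟨x', hx', rfl⟩ | ⟨y, hy, rfl⟩
    · have hρ : ρ₁ x' = ρ₂ x := (hσ hx').symm.trans hxz.symm
      obtain ⟨y, hy, hγy⟩ := hU.exists_of_eq₁₂ x' hx' x hx hρ
      obtain ⟨a₁, ha₁, rfl, rfl⟩ := hU.exists_of_eq₁ _ hx' y hy hγy.symm
      obtain ⟨a, ha, rfl, hκa⟩ := hU.exists_of_eq₂ x hx _ hy (hρ.symm.trans hγy.symm)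
      exact ⟨a, ha, rfl, by rw [Function.comp_apply, hκa]; exact (hC.comm ha₁).symm⟩
    · obtain ⟨a, ha, rfl, rfl⟩ := hU.exists_of_eq₂ x hx y hy (hxz.trans (hτ hy))
      exact ⟨a, ha, rfl, rfl⟩

end Gluing

section Independence

variable {Xk₁ Xl₁ Xr₁ Xd₁ Xh₁ Xk₂ Xl₂ Xd₂ Xg Xd Xc : Type}
  {K₁ : Set Xk₁} {L₁ : Set Xl₁} {R₁ : Set Xr₁} {D₁ : Set Xd₁} {H₁ : Set Xh₁}
  {K₂ : Set Xk₂} {L₂ : Set Xl₂} {D₂ : Set Xd₂} {G : Set Xg} {D : Set Xd} {C : Set Xc}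
  {bl₁ : Xk₁ → Xl₁} {br₁ : Xk₁ → Xr₁} {k₁ : Xk₁ → Xd₁} {m₁ : Xl₁ → Xg} {d₁G : Xd₁ → Xg}
  {r₁ : Xr₁ → Xh₁} {d₁H : Xd₁ → Xh₁} {bl₂ : Xk₂ → Xl₂} {k₂ : Xk₂ → Xd₂} {m₂ : Xl₂ → Xg}
  {d₂G : Xd₂ → Xg} {j₁ : Xl₁ → Xd₂} {j₂ : Xl₂ → Xd₁} {π₁ : Xd → Xd₁} {π₂ : Xd → Xd₂}
  {κ₁ : Xk₁ → Xd} {κ₂ : Xk₂ → Xd} {σ : Xr₁ → Xc} {τ : Xd → Xc} {c : Xc → Xh₁}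

theorem isSetPushout_shifted_match
    (hG₁ : IsSetPushout K₁ L₁ D₁ G bl₁ k₁ m₁ d₁G)
    (hH₁ : IsSetPushout K₁ R₁ D₁ H₁ br₁ k₁ r₁ d₁H)
    (hG₂ : IsSetPushout K₂ L₂ D₂ G bl₂ k₂ m₂ d₂G)
    (hj₁ : MapsTo j₁ L₁ D₂) (hj₁m : EqOn (d₂G ∘ j₁) m₁ L₁)
    (hj₂ : MapsTo j₂ L₂ D₁) (hj₂m : EqOn (d₁G ∘ j₂) m₂ L₂)
    (hD : IsSetPullback D D₁ D₂ π₁ π₂ d₁G d₂G) (hκ₁ : EqOn (π₁ ∘ κ₁) k₁ K₁)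
    (hκ₂ : MapsTo κ₂ K₂ D) (hκ₂₁ : EqOn (π₁ ∘ κ₂) (j₂ ∘ bl₂) K₂)
    (hC : IsSetPushout K₁ R₁ D C br₁ κ₁ σ τ)
    (hσ : EqOn (c ∘ σ) r₁ R₁) (hτ : EqOn (c ∘ τ) (d₁H ∘ π₁) D) :
    IsSetPushout K₂ L₂ C H₁ bl₂ (τ ∘ κ₂) (d₁H ∘ j₂) c := by
  have hj₂i : InjOn j₂ L₂ := (hG₂.injOn_f.congr hj₂m.symm).of_comp
  have hκ₂i : InjOn κ₂ K₂ :=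
    ((hj₂i.comp hG₂.injOn_b hG₂.mapsTo_b).congr hκ₂₁.symm).of_comp
  have hπ₁i : InjOn π₁ D := hD.injOn_p hG₂.injOn_g
  have hcomm : EqOn ((d₁H ∘ j₂) ∘ bl₂) (c ∘ τ ∘ κ₂) K₂ := fun a ha =>
    ((hτ (hκ₂ ha)).trans (congrArg d₁H (hκ₂₁ ha))).symm
  have hci : InjOn c C := by
    refine hC.injOn_of_comp (hH₁.injOn_f.congr hσ.symm)
      ((hH₁.injOn_g.comp hπ₁i hD.mapsTo_p).congr hτ.symm) fun x hx y hy hxy => ?_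
    obtain ⟨a, ha, rfl, hka⟩ := hH₁.exists_of_eq x hx (π₁ y) (hD.mapsTo_p hy)
      ((hσ hx).symm.trans (hxy.trans (hτ hy)))
    exact (hC.comm ha).trans (congrArg τ (hπ₁i (hC.mapsTo_c ha) hy ((hκ₁ ha).trans hka)))
  refine
    { mapsTo_b := hG₂.mapsTo_b
      mapsTo_c := hC.mapsTo_g.comp hκ₂
      mapsTo_f := hH₁.mapsTo_g.comp hj₂
      mapsTo_g := ?_
      comm := hcomm
      injOn_b := hG₂.injOn_b
      injOn_c := hC.injOn_g.comp hκ₂i hκ₂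
      injOn_f := hH₁.injOn_g.comp hj₂i hj₂
      injOn_g := hci
      subset_union := ?_
      exists_of_eq := fun l hl z hz hlz => ?_ }
  · intro z hz
    rcases hC.subset_union hz with ⟨x, hx, rfl⟩ | ⟨y, hy, rfl⟩
    · rw [← Function.comp_apply (f := c), hσ hx]
      exact hH₁.mapsTo_f hx
    · rw [← Function.comp_apply (f := c), hτ hy]
      exact hH₁.mapsTo_g (hD.mapsTo_p hy)
  · intro z hz
    rcases hH₁.subset_union hz with ⟨x, hx, rfl⟩ | ⟨y, hy, rfl⟩
    · exact Or.inr ⟨σ x, hC.mapsTo_f hx, hσ hx⟩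
    rcases hG₂.subset_union (hG₁.mapsTo_g hy) with ⟨l, hl, hly⟩ | ⟨y₂, hy₂, hy₂y⟩
    · refine Or.inl ⟨l, hl, congrArg d₁H (hG₁.injOn_g (hj₂ hl) hy ((hj₂m hl).trans hly))⟩
    · obtain ⟨p, hp, rfl, -⟩ := hD.exists_of_eq y hy y₂ hy₂ hy₂y.symm
      exact Or.inr ⟨τ p, hC.mapsTo_g hp, hτ hp⟩
  -- `m₂ l` lies in the context `D₂` of the second rule, so `l` lies in its interface.
  have hm : m₂ l ∈ d₂G '' D₂ := by
    rcases hC.subset_union hz with ⟨x, hx, rfl⟩ | ⟨p, hp, rfl⟩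
    · obtain ⟨a₁, ha₁, rfl, hka₁⟩ :=
        hH₁.exists_of_eq x hx (j₂ l) (hj₂ hl) ((hσ hx).symm.trans hlz.symm)
      refine ⟨j₁ (bl₁ a₁), hj₁ (hG₁.mapsTo_b ha₁), ?_⟩
      calc d₂G (j₁ (bl₁ a₁)) = m₁ (bl₁ a₁) := hj₁m (hG₁.mapsTo_b ha₁)
        _ = d₁G (j₂ l) := (hG₁.comm ha₁).trans (congrArg d₁G hka₁)
        _ = m₂ l := hj₂m hl
    · have hjl : j₂ l = π₁ p := hH₁.injOn_g (hj₂ hl) (hD.mapsTo_p hp) (hlz.trans (hτ hp))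
      exact ⟨π₂ p, hD.mapsTo_q hp,
        (hD.comm hp).symm.trans ((congrArg d₁G hjl.symm).trans (hj₂m hl))⟩
  obtain ⟨y, hy, hyl⟩ := hm
  obtain ⟨a, ha, rfl, -⟩ := hG₂.exists_of_eq l hl y hy hyl.symm
  exact ⟨a, ha, rfl, hci (hC.mapsTo_g (hκ₂ ha)) hz ((hcomm ha).symm.trans hlz)⟩

end Independence

section Morphisms

variable {V₁ E₁ V₂ E₂ V₃ E₃ α β : Type} {G : PreGraph V₁ E₁ α β} {H : PreGraph V₂ E₂ α β}
  {K : PreGraph V₃ E₃ α β} {f f' : PreMorph V₁ E₁ V₂ E₂} {g : PreMorph V₂ E₂ V₃ E₃}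

theorem IsGraph.src_mem (hG : IsGraph G) {e : E₁} (he : e ∈ G.edges) : G.src e ∈ G.nodes :=
  hG.2.2.1 e he

theorem IsGraph.tgt_mem (hG : IsGraph G) {e : E₁} (he : e ∈ G.edges) : G.tgt e ∈ G.nodes :=
  hG.2.2.2 e he

theorem IsMorphism.mapsTo_nodes (hf : IsMorphism G H f) : MapsTo f.fv G.nodes H.nodes := hf.1

theorem IsMorphism.mapsTo_edges (hf : IsMorphism G H f) : MapsTo f.fe G.edges H.edges := hf.2.1

theorem IsMorphism.map_src (hf : IsMorphism G H f) {e : E₁} (he : e ∈ G.edges) :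
    f.fv (G.src e) = H.src (f.fe e) := hf.2.2.1 e he

theorem IsMorphism.map_tgt (hf : IsMorphism G H f) {e : E₁} (he : e ∈ G.edges) :
    f.fv (G.tgt e) = H.tgt (f.fe e) := hf.2.2.2.1 e he

theorem IsMorphism.map_lab (hf : IsMorphism G H f) {v : V₁} (hv : v ∈ G.nodes) :
    G.lab v = H.lab (f.fv v) := hf.2.2.2.2.1 v hv

theorem IsMorphism.map_mrk (hf : IsMorphism G H f) {e : E₁} (he : e ∈ G.edges) :
    G.mrk e = H.mrk (f.fe e) := hf.2.2.2.2.2 e he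

theorem isMorphism_comp (hf : IsMorphism G H f) (hg : IsMorphism H K g) :
    IsMorphism G K (comp g f) :=
  ⟨hg.mapsTo_nodes.comp hf.mapsTo_nodes, hg.mapsTo_edges.comp hf.mapsTo_edges,
    fun _ he => (congrArg g.fv (hf.map_src he)).trans (hg.map_src (hf.mapsTo_edges he)),
    fun _ he => (congrArg g.fv (hf.map_tgt he)).trans (hg.map_tgt (hf.mapsTo_edges he)),
    fun _ hv => (hf.map_lab hv).trans (hg.map_lab (hf.mapsTo_nodes hv)),
    fun _ he => (hf.map_mrk he).trans (hg.map_mrk (hf.mapsTo_edges he))⟩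

theorem isMorphism_idMor (G : PreGraph V₁ E₁ α β) : IsMorphism G G (idMor V₁ E₁) :=
  ⟨fun _ hv => hv, fun _ he => he, fun _ _ => rfl, fun _ _ => rfl, fun _ _ => rfl,
    fun _ _ => rfl⟩

theorem IsMorphism.congr (hG : IsGraph G) (hf : IsMorphism G H f) (h : MorEq G f f') :
    IsMorphism G H f' :=
  ⟨fun v hv => h.1 v hv ▸ hf.mapsTo_nodes hv, fun e he => h.2 e he ▸ hf.mapsTo_edges he,
    fun e he => by rw [← h.1 _ (hG.src_mem he), ← h.2 e he]; exact hf.map_src he,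
    fun e he => by rw [← h.1 _ (hG.tgt_mem he), ← h.2 e he]; exact hf.map_tgt he,
    fun v hv => by rw [← h.1 v hv]; exact hf.map_lab hv,
    fun e he => by rw [← h.2 e he]; exact hf.map_mrk he⟩

theorem MorEq.symm (h : MorEq G f f') : MorEq G f' f :=
  ⟨fun v hv => (h.1 v hv).symm, fun e he => (h.2 e he).symm⟩

theorem MorEq.trans {f'' : PreMorph V₁ E₁ V₂ E₂} (h : MorEq G f f') (h' : MorEq G f' f'') :
    MorEq G f f'' :=
  ⟨fun v hv => (h.1 v hv).trans (h'.1 v hv), fun e he => (h.2 e he).trans (h'.2 e he)⟩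

theorem MorEq.comp_right {f₂ f₂' : PreMorph V₂ E₂ V₃ E₃} (h : MorEq H f₂ f₂')
    (hf : IsMorphism G H f) : MorEq G (comp f₂ f) (comp f₂' f) :=
  ⟨fun _ hv => h.1 _ (hf.mapsTo_nodes hv), fun _ he => h.2 _ (hf.mapsTo_edges he)⟩

theorem morInjective_comp (hf : MorInjective G f) (hg : MorInjective H g)
    (hfm : IsMorphism G H f) : MorInjective G (comp g f) :=
  ⟨hg.1.comp hf.1 hfm.mapsTo_nodes, hg.2.comp hf.2 hfm.mapsTo_edges⟩

end Morphisms

def PreGraph.restrict {V E α β : Type} (G : PreGraph V E α β) (N : Set V) (A : Set E) :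
    PreGraph V E α β :=
  { G with nodes := N, edges := A }

section Cover

variable {V₂ E₂ V₃ E₃ V₄ E₄ V' E' α β : Type} {B : PreGraph V₂ E₂ α β}
  {C : PreGraph V₃ E₃ α β} {D : PreGraph V₄ E₄ α β} {D' : PreGraph V' E' α β}
  {f : PreMorph V₂ E₂ V₄ E₄} {g : PreMorph V₃ E₃ V₄ E₄}

theorem IsGraph.of_cover (hB : IsGraph B) (hC : IsGraph C) (hf : IsMorphism B D f)
    (hg : IsMorphism C D g) (hv : D.nodes ⊆ f.fv '' B.nodes ∪ g.fv '' C.nodes)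
    (he : D.edges ⊆ f.fe '' B.edges ∪ g.fe '' C.edges) : IsGraph D := by
  refine ⟨((hB.1.image _).union (hC.1.image _)).subset hv,
    ((hB.2.1.image _).union (hC.2.1.image _)).subset he, fun e hed => ?_, fun e hed => ?_⟩
  · rcases he hed with ⟨x, hx, rfl⟩ | ⟨y, hy, rfl⟩
    exacts [hf.map_src hx ▸ hf.mapsTo_nodes (hB.src_mem hx),
      hg.map_src hy ▸ hg.mapsTo_nodes (hC.src_mem hy)]
  · rcases he hed with ⟨x, hx, rfl⟩ | ⟨y, hy, rfl⟩
    exacts [hf.map_tgt hx ▸ hf.mapsTo_nodes (hB.tgt_mem hx),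
      hg.map_tgt hy ▸ hg.mapsTo_nodes (hC.tgt_mem hy)]

theorem IsMorphism.of_cover (hf : IsMorphism B D f) (hg : IsMorphism C D g)
    (hv : D.nodes ⊆ f.fv '' B.nodes ∪ g.fv '' C.nodes)
    (he : D.edges ⊆ f.fe '' B.edges ∪ g.fe '' C.edges) {u : PreMorph V₄ E₄ V' E'}
    (huf : IsMorphism B D' (comp u f)) (hug : IsMorphism C D' (comp u g)) :
    IsMorphism D D' u := by
  refine ⟨fun z hz => ?_, fun z hz => ?_, fun z hz => ?_, fun z hz => ?_, fun z hz => ?_,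
    fun z hz => ?_⟩
  · rcases hv hz with ⟨x, hx, rfl⟩ | ⟨y, hy, rfl⟩
    exacts [huf.mapsTo_nodes hx, hug.mapsTo_nodes hy]
  · rcases he hz with ⟨x, hx, rfl⟩ | ⟨y, hy, rfl⟩
    exacts [huf.mapsTo_edges hx, hug.mapsTo_edges hy]
  · rcases he hz with ⟨x, hx, rfl⟩ | ⟨y, hy, rfl⟩
    · rw [← hf.map_src hx]; exact huf.map_src hx
    · rw [← hg.map_src hy]; exact hug.map_src hy
  · rcases he hz with ⟨x, hx, rfl⟩ | ⟨y, hy, rfl⟩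
    · rw [← hf.map_tgt hx]; exact huf.map_tgt hx
    · rw [← hg.map_tgt hy]; exact hug.map_tgt hy
  · rcases hv hz with ⟨x, hx, rfl⟩ | ⟨y, hy, rfl⟩
    · rw [← hf.map_lab hx]; exact huf.map_lab hx
    · rw [← hg.map_lab hy]; exact hug.map_lab hy
  · rcases he hz with ⟨x, hx, rfl⟩ | ⟨y, hy, rfl⟩
    · rw [← hf.map_mrk hx]; exact huf.map_mrk hx
    · rw [← hg.map_mrk hy]; exact hug.map_mrk hy

end Cover

section Pushout

variable {V₁ E₁ V₂ E₂ V₃ E₃ V₄ E₄ α β : Type} {A : PreGraph V₁ E₁ α β}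
  {B : PreGraph V₂ E₂ α β} {C : PreGraph V₃ E₃ α β} {D : PreGraph V₄ E₄ α β}
  {b : PreMorph V₁ E₁ V₂ E₂} {c : PreMorph V₁ E₁ V₃ E₃}
  {f : PreMorph V₂ E₂ V₄ E₄} {g : PreMorph V₃ E₃ V₄ E₄}

theorem isPushout_of_isSetPushout (hB : IsGraph B) (hC : IsGraph C)
    (hb : IsMorphism A B b) (hc : IsMorphism A C c) (hf : IsMorphism B D f)
    (hg : IsMorphism C D g)
    (hv : IsSetPushout A.nodes B.nodes C.nodes D.nodes b.fv c.fv f.fv g.fv)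
    (he : IsSetPushout A.edges B.edges C.edges D.edges b.fe c.fe f.fe g.fe)
    (hvn : Nonempty V₄ → Nonempty V₂ ∨ Nonempty V₃)
    (hen : Nonempty E₄ → Nonempty E₂ ∨ Nonempty E₃) :
    IsPushout A B C D b c f g := by
  refine ⟨hb, hc, hf, hg, ⟨hv.comm, he.comm⟩, fun V' E' D' p t _ hp ht hpt => ?_⟩
  obtain ⟨uv, huv₁, huv₂⟩ := hv.exists_desc hpt.1 hvn
  obtain ⟨ue, hue₁, hue₂⟩ := he.exists_desc hpt.2 hen
  have hu₁ : MorEq B (comp ⟨uv, ue⟩ f) p := ⟨huv₁, hue₁⟩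
  have hu₂ : MorEq C (comp ⟨uv, ue⟩ g) t := ⟨huv₂, hue₂⟩
  refine ⟨⟨uv, ue⟩, IsMorphism.of_cover hf hg hv.subset_union he.subset_union
    (hp.congr hB hu₁.symm) (ht.congr hC hu₂.symm), hu₁, hu₂, fun u' _ hu'₁ hu'₂ =>
      ⟨hv.eqOn_of_comp (hu'₁.trans hu₁.symm).1 (hu'₂.trans hu₂.symm).1,
        he.eqOn_of_comp (hu'₁.trans hu₁.symm).2 (hu'₂.trans hu₂.symm).2⟩⟩

theorem IsPushout.morEq_of_comp {V' E' : Type} {D' : PreGraph V' E' α β}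
    (h : IsPushout A B C D b c f g) (hD' : IsGraph D') {u u' : PreMorph V₄ E₄ V' E'}
    (hu : IsMorphism D D' u) (hu' : IsMorphism D D' u')
    (hf : MorEq B (comp u f) (comp u' f)) (hg : MorEq C (comp u g) (comp u' g)) :
    MorEq D u u' := by
  obtain ⟨-, -, hfm, hgm, hcomm, hup⟩ := h
  have hcomm' : MorEq A (comp (comp u' f) b) (comp (comp u' g) c) :=
    ⟨fun a ha => congrArg u'.fv (hcomm.1 a ha), fun a ha => congrArg u'.fe (hcomm.2 a ha)⟩
  obtain ⟨w, -, -, -, huniq⟩ := hup _ _ D' _ _ hD' (isMorphism_comp hfm hu')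
    (isMorphism_comp hgm hu') hcomm'
  have h₁ := huniq u hu hf hg
  have h₂ := huniq u' hu' ⟨fun _ _ => rfl, fun _ _ => rfl⟩ ⟨fun _ _ => rfl, fun _ _ => rfl⟩
  exact h₁.trans h₂.symm

/-- The subgraph on the two images receives a mediating morphism, which by uniqueness is
the identity. -/
theorem IsPushout.subset_union (h : IsPushout A B C D b c f g) (hB : IsGraph B)
    (hC : IsGraph C) (hD : IsGraph D) :
    D.nodes ⊆ f.fv '' B.nodes ∪ g.fv '' C.nodes ∧
      D.edges ⊆ f.fe '' B.edges ∪ g.fe '' C.edges := by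
  obtain ⟨-, -, hf, hg, hcomm, hup⟩ := id h
  set I := D.restrict (f.fv '' B.nodes ∪ g.fv '' C.nodes) (f.fe '' B.edges ∪ g.fe '' C.edges)
  have hfI : IsMorphism B I f :=
    ⟨fun x hx => Or.inl ⟨x, hx, rfl⟩, fun x hx => Or.inl ⟨x, hx, rfl⟩, hf.2.2⟩
  have hgI : IsMorphism C I g :=
    ⟨fun y hy => Or.inr ⟨y, hy, rfl⟩, fun y hy => Or.inr ⟨y, hy, rfl⟩, hg.2.2⟩
  have hI : IsGraph I := IsGraph.of_cover hB hC hfI hgI subset_rfl subset_rfl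
  obtain ⟨u, hu, hu₁, hu₂, -⟩ := hup _ _ I f g hI hfI hgI hcomm
  have hIv : I.nodes ⊆ D.nodes :=
    union_subset (image_subset_iff.2 hf.mapsTo_nodes) (image_subset_iff.2 hg.mapsTo_nodes)
  have hIe : I.edges ⊆ D.edges :=
    union_subset (image_subset_iff.2 hf.mapsTo_edges) (image_subset_iff.2 hg.mapsTo_edges)
  have hid := h.morEq_of_comp hD ⟨fun z hz => hIv (hu.mapsTo_nodes hz),
    fun z hz => hIe (hu.mapsTo_edges hz), hu.2.2⟩
    (isMorphism_idMor D) hu₁ hu₂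
  exact ⟨fun z hz => (show u.fv z = z from hid.1 z hz) ▸ hu.mapsTo_nodes hz,
    fun z hz => (show u.fe z = z from hid.2 z hz) ▸ hu.mapsTo_edges hz⟩

end Pushout

section ExplicitPushout

variable {V₁ E₁ V₂ E₂ V₃ E₃ V₄ E₄ α β : Type} {A : PreGraph V₁ E₁ α β}
  {B : PreGraph V₂ E₂ α β} {C : PreGraph V₃ E₃ α β} {D : PreGraph V₄ E₄ α β}
  {b : PreMorph V₁ E₁ V₂ E₂} {c : PreMorph V₁ E₁ V₃ E₃}
  {f : PreMorph V₂ E₂ V₄ E₄} {g : PreMorph V₃ E₃ V₄ E₄}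

/-- The elements of `b(A)` in `B` are replaced by their counterparts in `C`. -/
noncomputable def pushoutGraph (A : PreGraph V₁ E₁ α β) (B : PreGraph V₂ E₂ α β)
    (C : PreGraph V₃ E₃ α β) (b : PreMorph V₁ E₁ V₂ E₂) (c : PreMorph V₁ E₁ V₃ E₃) :
    PreGraph (V₂ ⊕ V₃) (E₂ ⊕ E₃) α β where
  nodes := glue A.nodes b.fv c.fv '' B.nodes ∪ Sum.inr '' C.nodes
  edges := glue A.edges b.fe c.fe '' B.edges ∪ Sum.inr '' C.edges
  src := Sum.elim (glue A.nodes b.fv c.fv ∘ B.src) (Sum.inr ∘ C.src)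
  tgt := Sum.elim (glue A.nodes b.fv c.fv ∘ B.tgt) (Sum.inr ∘ C.tgt)
  lab := Sum.elim B.lab C.lab
  mrk := Sum.elim B.mrk C.mrk

noncomputable def pushoutInl (A : PreGraph V₁ E₁ α β) (b : PreMorph V₁ E₁ V₂ E₂)
    (c : PreMorph V₁ E₁ V₃ E₃) : PreMorph V₂ E₂ (V₂ ⊕ V₃) (E₂ ⊕ E₃) :=
  ⟨glue A.nodes b.fv c.fv, glue A.edges b.fe c.fe⟩

def pushoutInr (V₂ E₂ V₃ E₃ : Type) : PreMorph V₃ E₃ (V₂ ⊕ V₃) (E₂ ⊕ E₃) :=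
  ⟨Sum.inr, Sum.inr⟩

theorem isSetPushout_pushoutGraph_nodes (hb : IsMorphism A B b) (hc : IsMorphism A C c)
    (hbi : MorInjective A b) (hci : MorInjective A c) :
    IsSetPushout A.nodes B.nodes C.nodes (pushoutGraph A B C b c).nodes b.fv c.fv
      (pushoutInl A b c).fv (pushoutInr V₂ E₂ V₃ E₃).fv :=
  isSetPushout_glue hb.mapsTo_nodes hc.mapsTo_nodes hbi.1 hci.1

theorem isSetPushout_pushoutGraph_edges (hb : IsMorphism A B b) (hc : IsMorphism A C c)
    (hbi : MorInjective A b) (hci : MorInjective A c) :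
    IsSetPushout A.edges B.edges C.edges (pushoutGraph A B C b c).edges b.fe c.fe
      (pushoutInl A b c).fe (pushoutInr V₂ E₂ V₃ E₃).fe :=
  isSetPushout_glue hb.mapsTo_edges hc.mapsTo_edges hbi.2 hci.2

theorem isMorphism_pushoutInl (hA : IsGraph A) (hb : IsMorphism A B b) (hc : IsMorphism A C c)
    (hbi : MorInjective A b) : IsMorphism B (pushoutGraph A B C b c) (pushoutInl A b c) := by
  refine ⟨fun x hx => Or.inl (mem_image_of_mem _ hx), fun x hx => Or.inl (mem_image_of_mem _ hx),
    fun e _ => ?_, fun e _ => ?_, fun v _ => ?_, fun e _ => ?_⟩ <;>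
    simp only [pushoutInl, pushoutGraph]
  · by_cases h : ∃ a ∈ A.edges, b.fe a = e
    · obtain ⟨a, ha, rfl⟩ := h
      rw [glue_apply_of_mem hbi.2 ha, ← hb.map_src ha, glue_apply_of_mem hbi.1 (hA.src_mem ha)]
      exact congrArg Sum.inr (hc.map_src ha)
    · rw [glue_apply_of_not_mem h]; rfl
  · by_cases h : ∃ a ∈ A.edges, b.fe a = e
    · obtain ⟨a, ha, rfl⟩ := h
      rw [glue_apply_of_mem hbi.2 ha, ← hb.map_tgt ha, glue_apply_of_mem hbi.1 (hA.tgt_mem ha)]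
      exact congrArg Sum.inr (hc.map_tgt ha)
    · rw [glue_apply_of_not_mem h]; rfl
  · by_cases h : ∃ a ∈ A.nodes, b.fv a = v
    · obtain ⟨a, ha, rfl⟩ := h
      rw [glue_apply_of_mem hbi.1 ha, ← hb.map_lab ha]
      exact hc.map_lab ha
    · rw [glue_apply_of_not_mem h]; rfl
  · by_cases h : ∃ a ∈ A.edges, b.fe a = e
    · obtain ⟨a, ha, rfl⟩ := h
      rw [glue_apply_of_mem hbi.2 ha, ← hb.map_mrk ha]
      exact hc.map_mrk ha
    · rw [glue_apply_of_not_mem h]; rfl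

theorem isMorphism_pushoutInr :
    IsMorphism C (pushoutGraph A B C b c) (pushoutInr V₂ E₂ V₃ E₃) :=
  ⟨fun _ hy => Or.inr (mem_image_of_mem _ hy), fun _ hy => Or.inr (mem_image_of_mem _ hy),
    fun _ _ => rfl, fun _ _ => rfl, fun _ _ => rfl, fun _ _ => rfl⟩

theorem isGraph_pushoutGraph (hA : IsGraph A) (hB : IsGraph B) (hC : IsGraph C)
    (hb : IsMorphism A B b) (hc : IsMorphism A C c) (hbi : MorInjective A b) :
    IsGraph (pushoutGraph A B C b c) :=
  IsGraph.of_cover hB hC (isMorphism_pushoutInl hA hb hc hbi) isMorphism_pushoutInr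
    subset_rfl subset_rfl

theorem isPushout_pushoutGraph (hA : IsGraph A) (hB : IsGraph B) (hC : IsGraph C)
    (hb : IsMorphism A B b) (hc : IsMorphism A C c) (hbi : MorInjective A b)
    (hci : MorInjective A c) :
    IsPushout A B C (pushoutGraph A B C b c) b c (pushoutInl A b c) (pushoutInr V₂ E₂ V₃ E₃) :=
  isPushout_of_isSetPushout hB hC hb hc (isMorphism_pushoutInl hA hb hc hbi)
    isMorphism_pushoutInr (isSetPushout_pushoutGraph_nodes hb hc hbi hci)
    (isSetPushout_pushoutGraph_edges hb hc hbi hci) nonempty_sum.1 nonempty_sum.1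

theorem IsPushout.exists_toPushoutGraph (h : IsPushout A B C D b c f g) (hA : IsGraph A)
    (hB : IsGraph B) (hC : IsGraph C) (hbi : MorInjective A b) :
    ∃ u : PreMorph V₄ E₄ (V₂ ⊕ V₃) (E₂ ⊕ E₃),
      MorEq B (comp u f) (pushoutInl A b c) ∧ MorEq C (comp u g) (pushoutInr V₂ E₂ V₃ E₃) := by
  obtain ⟨hb, hc, -, -, -, hup⟩ := h
  obtain ⟨u, -, hu₁, hu₂, -⟩ := hup _ _ _ _ _ (isGraph_pushoutGraph hA hB hC hb hc hbi)
    (isMorphism_pushoutInl hA hb hc hbi) isMorphism_pushoutInr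
    ⟨fun _ ha => glue_apply_of_mem hbi.1 ha, fun _ ha => glue_apply_of_mem hbi.2 ha⟩
  exact ⟨u, hu₁, hu₂⟩

theorem IsPushout.isSetPushout (h : IsPushout A B C D b c f g) (hA : IsGraph A)
    (hB : IsGraph B) (hC : IsGraph C) (hD : IsGraph D) (hbi : MorInjective A b)
    (hci : MorInjective A c) :
    IsSetPushout A.nodes B.nodes C.nodes D.nodes b.fv c.fv f.fv g.fv ∧
      IsSetPushout A.edges B.edges C.edges D.edges b.fe c.fe f.fe g.fe := by
  obtain ⟨u, hu₁, hu₂⟩ := h.exists_toPushoutGraph hA hB hC hbi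
  obtain ⟨hv, he⟩ := h.subset_union hB hC hD
  obtain ⟨hb, hc, hf, hg, hcomm, -⟩ := h
  exact ⟨(isSetPushout_pushoutGraph_nodes hb hc hbi hci).of_comp hf.1 hg.1 hcomm.1 hv hu₁.1 hu₂.1,
    (isSetPushout_pushoutGraph_edges hb hc hbi hci).of_comp hf.2.1 hg.2.1 hcomm.2 he hu₁.2 hu₂.2⟩

theorem IsPushout.nonempty_or_nonempty (h : IsPushout A B C D b c f g) (hA : IsGraph A)
    (hB : IsGraph B) (hC : IsGraph C) (hbi : MorInjective A b) :
    (Nonempty V₄ → Nonempty V₂ ∨ Nonempty V₃) ∧ (Nonempty E₄ → Nonempty E₂ ∨ Nonempty E₃) := by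
  obtain ⟨u, -, -⟩ := h.exists_toPushoutGraph hA hB hC hbi
  exact ⟨fun ⟨z⟩ => nonempty_sum.1 ⟨u.fv z⟩, fun ⟨z⟩ => nonempty_sum.1 ⟨u.fe z⟩⟩

theorem IsPushout.morInjective_right (h : IsPushout A B C D b c f g) (hbi : MorInjective A b)
    (hfi : MorInjective B f) : MorInjective A c :=
  ⟨InjOn.of_comp (g := g.fv) ((hfi.1.comp hbi.1 h.1.mapsTo_nodes).congr h.2.2.2.2.1.1),
    InjOn.of_comp (g := g.fe) ((hfi.2.comp hbi.2 h.1.mapsTo_edges).congr h.2.2.2.2.1.2)⟩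

end ExplicitPushout

section Pullback

variable {V₁ E₁ V₂ E₂ V E Vk Ek α β : Type} {D₁ : PreGraph V₁ E₁ α β}
  {D₂ : PreGraph V₂ E₂ α β} {G : PreGraph V E α β} {K : PreGraph Vk Ek α β}
  {d₁ : PreMorph V₁ E₁ V E} {d₂ : PreMorph V₂ E₂ V E}

def pullbackGraph (D₁ : PreGraph V₁ E₁ α β) (D₂ : PreGraph V₂ E₂ α β)
    (d₁ : PreMorph V₁ E₁ V E) (d₂ : PreMorph V₂ E₂ V E) : PreGraph (V₁ × V₂) (E₁ × E₂) α β where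
  nodes := {p | p.1 ∈ D₁.nodes ∧ p.2 ∈ D₂.nodes ∧ d₁.fv p.1 = d₂.fv p.2}
  edges := {p | p.1 ∈ D₁.edges ∧ p.2 ∈ D₂.edges ∧ d₁.fe p.1 = d₂.fe p.2}
  src p := (D₁.src p.1, D₂.src p.2)
  tgt p := (D₁.tgt p.1, D₂.tgt p.2)
  lab p := D₁.lab p.1
  mrk p := D₁.mrk p.1

def pullbackFst (V₁ E₁ V₂ E₂ : Type) : PreMorph (V₁ × V₂) (E₁ × E₂) V₁ E₁ :=
  ⟨Prod.fst, Prod.fst⟩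

def pullbackSnd (V₁ E₁ V₂ E₂ : Type) : PreMorph (V₁ × V₂) (E₁ × E₂) V₂ E₂ :=
  ⟨Prod.snd, Prod.snd⟩

def pullbackLift (f₁ : PreMorph Vk Ek V₁ E₁) (f₂ : PreMorph Vk Ek V₂ E₂) :
    PreMorph Vk Ek (V₁ × V₂) (E₁ × E₂) :=
  ⟨fun x => (f₁.fv x, f₂.fv x), fun x => (f₁.fe x, f₂.fe x)⟩

theorem isGraph_pullbackGraph (hD₁ : IsGraph D₁) (hD₂ : IsGraph D₂) (hd₁ : IsMorphism D₁ G d₁)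
    (hd₂ : IsMorphism D₂ G d₂) : IsGraph (pullbackGraph D₁ D₂ d₁ d₂) :=
  ⟨(hD₁.1.prod hD₂.1).subset fun _ hp => ⟨hp.1, hp.2.1⟩,
    (hD₁.2.1.prod hD₂.2.1).subset fun _ hp => ⟨hp.1, hp.2.1⟩,
    fun _ ⟨h₁, h₂, h⟩ => ⟨hD₁.src_mem h₁, hD₂.src_mem h₂,
      (hd₁.map_src h₁).trans ((congrArg G.src h).trans (hd₂.map_src h₂).symm)⟩,
    fun _ ⟨h₁, h₂, h⟩ => ⟨hD₁.tgt_mem h₁, hD₂.tgt_mem h₂,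
      (hd₁.map_tgt h₁).trans ((congrArg G.tgt h).trans (hd₂.map_tgt h₂).symm)⟩⟩

theorem isMorphism_pullbackFst :
    IsMorphism (pullbackGraph D₁ D₂ d₁ d₂) D₁ (pullbackFst V₁ E₁ V₂ E₂) :=
  ⟨fun _ hp => hp.1, fun _ hp => hp.1, fun _ _ => rfl, fun _ _ => rfl, fun _ _ => rfl,
    fun _ _ => rfl⟩

theorem isMorphism_pullbackSnd (hd₁ : IsMorphism D₁ G d₁) (hd₂ : IsMorphism D₂ G d₂) :
    IsMorphism (pullbackGraph D₁ D₂ d₁ d₂) D₂ (pullbackSnd V₁ E₁ V₂ E₂) :=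
  ⟨fun _ hp => hp.2.1, fun _ hp => hp.2.1, fun _ _ => rfl, fun _ _ => rfl,
    fun _ ⟨h₁, h₂, h⟩ => (hd₁.map_lab h₁).trans ((congrArg G.lab h).trans (hd₂.map_lab h₂).symm),
    fun _ ⟨h₁, h₂, h⟩ => (hd₁.map_mrk h₁).trans ((congrArg G.mrk h).trans (hd₂.map_mrk h₂).symm)⟩

theorem isSetPullback_pullbackGraph_nodes :
    IsSetPullback (pullbackGraph D₁ D₂ d₁ d₂).nodes D₁.nodes D₂.nodes Prod.fst Prod.snd
      d₁.fv d₂.fv where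
  mapsTo_p _ hp := hp.1
  mapsTo_q _ hp := hp.2.1
  comm _ hp := hp.2.2
  ext _ _ _ _ h₁ h₂ := Prod.ext h₁ h₂
  exists_of_eq y hy z hz h := ⟨(y, z), ⟨hy, hz, h⟩, rfl, rfl⟩

theorem isSetPullback_pullbackGraph_edges :
    IsSetPullback (pullbackGraph D₁ D₂ d₁ d₂).edges D₁.edges D₂.edges Prod.fst Prod.snd
      d₁.fe d₂.fe where
  mapsTo_p _ hp := hp.1
  mapsTo_q _ hp := hp.2.1
  comm _ hp := hp.2.2
  ext _ _ _ _ h₁ h₂ := Prod.ext h₁ h₂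
  exists_of_eq y hy z hz h := ⟨(y, z), ⟨hy, hz, h⟩, rfl, rfl⟩

theorem isMorphism_pullbackLift {f₁ : PreMorph Vk Ek V₁ E₁} {f₂ : PreMorph Vk Ek V₂ E₂}
    (hf₁ : IsMorphism K D₁ f₁) (hf₂ : IsMorphism K D₂ f₂)
    (h : MorEq K (comp d₁ f₁) (comp d₂ f₂)) :
    IsMorphism K (pullbackGraph D₁ D₂ d₁ d₂) (pullbackLift f₁ f₂) :=
  ⟨fun _ hx => ⟨hf₁.mapsTo_nodes hx, hf₂.mapsTo_nodes hx, h.1 _ hx⟩,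
    fun _ hx => ⟨hf₁.mapsTo_edges hx, hf₂.mapsTo_edges hx, h.2 _ hx⟩,
    fun _ he => Prod.ext (hf₁.map_src he) (hf₂.map_src he),
    fun _ he => Prod.ext (hf₁.map_tgt he) (hf₂.map_tgt he),
    fun _ hx => hf₁.map_lab hx, fun _ he => hf₁.map_mrk he⟩

theorem morInjective_pullbackLift_left {f₁ : PreMorph Vk Ek V₁ E₁} (hf₁ : MorInjective K f₁)
    (f₂ : PreMorph Vk Ek V₂ E₂) : MorInjective K (pullbackLift f₁ f₂) :=
  ⟨InjOn.of_comp (g := Prod.fst) hf₁.1, InjOn.of_comp (g := Prod.fst) hf₁.2⟩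

theorem morInjective_pullbackLift_right (f₁ : PreMorph Vk Ek V₁ E₁) {f₂ : PreMorph Vk Ek V₂ E₂}
    (hf₂ : MorInjective K f₂) : MorInjective K (pullbackLift f₁ f₂) :=
  ⟨InjOn.of_comp (g := Prod.snd) hf₂.1, InjOn.of_comp (g := Prod.snd) hf₂.2⟩

end Pullback

/-- The carrier-level shadow of `H₁ = L₂ +_{K₂} (R₁ +_{K₁} D)`. -/
theorem nonempty_or_nonempty_sum {Vh Vr Vd₁ Vl Vd₂ Vd : Type}
    (hH : Nonempty Vh → Nonempty Vr ∨ Nonempty Vd₁) (hG : Nonempty Vd₁ → Nonempty Vl ∨ Nonempty Vd₂)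
    (hD : Nonempty Vd₁ → Nonempty Vd₂ → Nonempty Vd) :
    Nonempty Vh → Nonempty Vl ∨ Nonempty (Vr ⊕ Vd) := by
  intro h
  rcases hH h with hr | hd₁
  · exact Or.inr (nonempty_sum.2 (Or.inl hr))
  rcases hG hd₁ with hl | hd₂
  exacts [Or.inl hl, Or.inr (nonempty_sum.2 (Or.inr (hD hd₁ hd₂)))]

theorem exists_isDirectDerivation_of_parallelIndependent
    {Vl₁ El₁ Vk₁ Ek₁ Vr₁ Er₁ Vl₂ El₂ Vk₂ Ek₂ Vr₂ Er₂ Vg Eg Vd₁ Ed₁ Vh₁ Eh₁ Vd₂ Ed₂ Vd Ed Vu Eu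
      α β : Type}
    {L₁ : PreGraph Vl₁ El₁ α β} {K₁ : PreGraph Vk₁ Ek₁ α β} {R₁ : PreGraph Vr₁ Er₁ α β}
    {L₂ : PreGraph Vl₂ El₂ α β} {K₂ : PreGraph Vk₂ Ek₂ α β} {R₂ : PreGraph Vr₂ Er₂ α β}
    {G : PreGraph Vg Eg α β} {D₁ : PreGraph Vd₁ Ed₁ α β} {H₁ : PreGraph Vh₁ Eh₁ α β}
    {D₂ : PreGraph Vd₂ Ed₂ α β} {D : PreGraph Vd Ed α β} {U : PreGraph Vu Eu α β}
    {bl₁ : PreMorph Vk₁ Ek₁ Vl₁ El₁} {br₁ : PreMorph Vk₁ Ek₁ Vr₁ Er₁}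
    {bl₂ : PreMorph Vk₂ Ek₂ Vl₂ El₂} {br₂ : PreMorph Vk₂ Ek₂ Vr₂ Er₂}
    {m₁ : PreMorph Vl₁ El₁ Vg Eg} {k₁ : PreMorph Vk₁ Ek₁ Vd₁ Ed₁}
    {d₁G : PreMorph Vd₁ Ed₁ Vg Eg} {d₁H : PreMorph Vd₁ Ed₁ Vh₁ Eh₁}
    {r₁ : PreMorph Vr₁ Er₁ Vh₁ Eh₁} {m₂ : PreMorph Vl₂ El₂ Vg Eg}
    {k₂ : PreMorph Vk₂ Ek₂ Vd₂ Ed₂} {d₂G : PreMorph Vd₂ Ed₂ Vg Eg}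
    {j₁ : PreMorph Vl₁ El₁ Vd₂ Ed₂} {j₂ : PreMorph Vl₂ El₂ Vd₁ Ed₁}
    {π₁ : PreMorph Vd Ed Vd₁ Ed₁} {π₂ : PreMorph Vd Ed Vd₂ Ed₂}
    {κ₁ : PreMorph Vk₁ Ek₁ Vd Ed} {κ₂ : PreMorph Vk₂ Ek₂ Vd Ed}
    {γ : PreMorph Vd Ed Vu Eu} {ρ₁ : PreMorph Vr₁ Er₁ Vu Eu} {ρ₂ : PreMorph Vr₂ Er₂ Vu Eu}
    (hL₁ : IsGraph L₁) (hK₁ : IsGraph K₁) (hR₁ : IsGraph R₁) (hL₂ : IsGraph L₂)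
    (hK₂ : IsGraph K₂) (hR₂ : IsGraph R₂) (hG : IsGraph G) (hD₁ : IsGraph D₁)
    (hH₁ : IsGraph H₁) (hD₂ : IsGraph D₂) (hD : IsGraph D) (hU : IsGraph U)
    (hbl₁ : MorInjective K₁ bl₁) (hbr₁ : MorInjective K₁ br₁) (hm₁ : MorInjective L₁ m₁)
    (hbl₂ : MorInjective K₂ bl₂) (hbr₂ : MorInjective K₂ br₂) (hm₂ : MorInjective L₂ m₂)
    (dd₁ : IsDirectDerivation L₁ K₁ R₁ G D₁ H₁ bl₁ br₁ m₁ k₁ d₁G d₁H r₁)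
    (po₂L : IsPushout K₂ L₂ D₂ G bl₂ k₂ m₂ d₂G) (hbr₂m : IsMorphism K₂ R₂ br₂)
    (hj₁ : IsMorphism L₁ D₂ j₁) (hj₂ : IsMorphism L₂ D₁ j₂)
    (hj₁m : MorEq L₁ (comp d₂G j₁) m₁) (hj₂m : MorEq L₂ (comp d₁G j₂) m₂)
    (hπ₁ : IsMorphism D D₁ π₁)
    (hDv : IsSetPullback D.nodes D₁.nodes D₂.nodes π₁.fv π₂.fv d₁G.fv d₂G.fv)
    (hDe : IsSetPullback D.edges D₁.edges D₂.edges π₁.fe π₂.fe d₁G.fe d₂G.fe)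
    (hDvn : Nonempty Vd₁ → Nonempty Vd₂ → Nonempty Vd)
    (hDen : Nonempty Ed₁ → Nonempty Ed₂ → Nonempty Ed)
    (hκ₁ : IsMorphism K₁ D κ₁) (hκ₁₁ : MorEq K₁ (comp π₁ κ₁) k₁)
    (hκ₂ : IsMorphism K₂ D κ₂) (hκ₂₁ : MorEq K₂ (comp π₁ κ₂) (comp j₂ bl₂))
    (hγ : IsMorphism D U γ) (hρ₁ : IsMorphism R₁ U ρ₁) (hρ₂ : IsMorphism R₂ U ρ₂)
    (hUv : IsDoubleGluing D.nodes K₁.nodes R₁.nodes K₂.nodes R₂.nodes U.nodes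
      κ₁.fv br₁.fv κ₂.fv br₂.fv γ.fv ρ₁.fv ρ₂.fv)
    (hUe : IsDoubleGluing D.edges K₁.edges R₁.edges K₂.edges R₂.edges U.edges
      κ₁.fe br₁.fe κ₂.fe br₂.fe γ.fe ρ₁.fe ρ₂.fe)
    (hUvn : Nonempty Vu → Nonempty Vr₁ ∨ Nonempty Vr₂ ∨ Nonempty Vd)
    (hUen : Nonempty Eu → Nonempty Er₁ ∨ Nonempty Er₂ ∨ Nonempty Ed) :
    ∃ (c₂H : PreMorph (Vr₁ ⊕ Vd) (Er₁ ⊕ Ed) Vh₁ Eh₁) (c₂G : PreMorph (Vr₁ ⊕ Vd) (Er₁ ⊕ Ed) Vu Eu),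
      IsGraph (pushoutGraph K₁ R₁ D br₁ κ₁) ∧ MorInjective L₂ (comp d₁H j₂) ∧
      IsDirectDerivation L₂ K₂ R₂ H₁ (pushoutGraph K₁ R₁ D br₁ κ₁) U bl₂ br₂ (comp d₁H j₂)
        (comp (pushoutInr Vr₁ Er₁ Vd Ed) κ₂) c₂H c₂G ρ₂ ∧
      ∃ (s₁ : PreMorph Vr₁ Er₁ (Vr₁ ⊕ Vd) (Er₁ ⊕ Ed)) (s₂ : PreMorph Vl₂ El₂ Vd₁ Ed₁),
        IsMorphism R₁ (pushoutGraph K₁ R₁ D br₁ κ₁) s₁ ∧ IsMorphism L₂ D₁ s₂ ∧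
        MorEq R₁ (comp c₂H s₁) r₁ ∧ MorEq L₂ (comp d₁H s₂) (comp d₁H j₂) := by
  obtain ⟨po₁L, po₁R⟩ := dd₁
  have hk₁ : MorInjective K₁ k₁ := po₁L.morInjective_right hbl₁ hm₁
  have hk₂ : MorInjective K₂ k₂ := po₂L.morInjective_right hbl₂ hm₂
  have hκ₁i : MorInjective K₁ κ₁ :=
    ⟨InjOn.of_comp (g := π₁.fv) (hk₁.1.congr hκ₁₁.symm.1),
      InjOn.of_comp (g := π₁.fe) (hk₁.2.congr hκ₁₁.symm.2)⟩
  obtain ⟨hG₁v, hG₁e⟩ := po₁L.isSetPushout hK₁ hL₁ hD₁ hG hbl₁ hk₁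
  obtain ⟨hH₁v, hH₁e⟩ := po₁R.isSetPushout hK₁ hR₁ hD₁ hH₁ hbr₁ hk₁
  obtain ⟨hG₂v, hG₂e⟩ := po₂L.isSetPushout hK₂ hL₂ hD₂ hG hbl₂ hk₂
  have hC : IsGraph (pushoutGraph K₁ R₁ D br₁ κ₁) :=
    isGraph_pushoutGraph hK₁ hR₁ hD po₁R.1 hκ₁ hbr₁
  obtain ⟨-, -, hs₁, hτ, -, hCup⟩ := isPushout_pushoutGraph hK₁ hR₁ hD po₁R.1 hκ₁ hbr₁ hκ₁i
  obtain ⟨c₂H, hc₂H, hc₂H₁, hc₂H₂, -⟩ := hCup _ _ H₁ r₁ (comp d₁H π₁) hH₁ po₁R.2.2.1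
    (isMorphism_comp hπ₁ po₁R.2.2.2.1) (po₁R.2.2.2.2.1.trans
      ⟨fun a ha => congrArg d₁H.fv (hκ₁₁.1 a ha).symm,
        fun a ha => congrArg d₁H.fe (hκ₁₁.2 a ha).symm⟩)
  obtain ⟨c₂G, hc₂G, hc₂G₁, hc₂G₂, -⟩ := hCup _ _ U ρ₁ γ hU hρ₁ hγ ⟨hUv.comm₁, hUe.comm₁⟩
  have hCv := isSetPushout_pushoutGraph_nodes po₁R.1 hκ₁ hbr₁ hκ₁i
  have hCe := isSetPushout_pushoutGraph_edges po₁R.1 hκ₁ hbr₁ hκ₁i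
  have hL₂v := isSetPushout_shifted_match hG₁v hH₁v hG₂v hj₁.mapsTo_nodes hj₁m.1
    hj₂.mapsTo_nodes hj₂m.1 hDv hκ₁₁.1 hκ₂.mapsTo_nodes hκ₂₁.1 hCv hc₂H₁.1 hc₂H₂.1
  have hL₂e := isSetPushout_shifted_match hG₁e hH₁e hG₂e hj₁.mapsTo_edges hj₁m.2
    hj₂.mapsTo_edges hj₂m.2 hDe hκ₁₁.2 hκ₂.mapsTo_edges hκ₂₁.2 hCe hc₂H₁.2 hc₂H₂.2
  have hR₂v := hUv.isSetPushout hCv hbr₂m.mapsTo_nodes hbr₂.1 hκ₂.mapsTo_nodes hL₂v.injOn_c.of_comp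
    hc₂G₁.1 hc₂G₂.1
  have hR₂e := hUe.isSetPushout hCe hbr₂m.mapsTo_edges hbr₂.2 hκ₂.mapsTo_edges hL₂e.injOn_c.of_comp
    hc₂G₁.2 hc₂G₂.2
  obtain ⟨hH₁vn, hH₁en⟩ := po₁R.nonempty_or_nonempty hK₁ hR₁ hD₁ hbr₁
  obtain ⟨hG₂vn, hG₂en⟩ := po₂L.nonempty_or_nonempty hK₂ hL₂ hD₂ hbl₂
  have hk₂' := isMorphism_comp hκ₂ hτ
  refine ⟨c₂H, c₂G, hC, ⟨hL₂v.injOn_f, hL₂e.injOn_f⟩, ⟨?_, ?_⟩,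
    pushoutInl K₁ br₁ κ₁, j₂, hs₁, hj₂, hc₂H₁, ⟨fun _ _ => rfl, fun _ _ => rfl⟩⟩
  · exact isPushout_of_isSetPushout hL₂ hC po₂L.1 hk₂' (isMorphism_comp hj₂ po₁R.2.2.2.1) hc₂H
      hL₂v hL₂e (nonempty_or_nonempty_sum hH₁vn (hG₂vn ∘ Nonempty.map d₁G.fv) hDvn)
      (nonempty_or_nonempty_sum hH₁en (hG₂en ∘ Nonempty.map d₁G.fe) hDen)
  · exact isPushout_of_isSetPushout hR₂ hC hbr₂m hk₂' hρ₂ hc₂G hR₂v hR₂e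
      (fun h => (or_left_comm.1 (hUvn h)).imp_right nonempty_sum.2)
      (fun h => (or_left_comm.1 (hUen h)).imp_right nonempty_sum.2)

theorem exists_isDoubleGluing {Vk₁ Ek₁ Vr₁ Er₁ Vk₂ Ek₂ Vr₂ Er₂ Vd Ed α β : Type}
    {K₁ : PreGraph Vk₁ Ek₁ α β} {R₁ : PreGraph Vr₁ Er₁ α β} {K₂ : PreGraph Vk₂ Ek₂ α β}
    {R₂ : PreGraph Vr₂ Er₂ α β} {D : PreGraph Vd Ed α β}
    {b₁ : PreMorph Vk₁ Ek₁ Vr₁ Er₁} {κ₁ : PreMorph Vk₁ Ek₁ Vd Ed}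
    {b₂ : PreMorph Vk₂ Ek₂ Vr₂ Er₂} {κ₂ : PreMorph Vk₂ Ek₂ Vd Ed}
    (hK₁ : IsGraph K₁) (hR₁ : IsGraph R₁) (hK₂ : IsGraph K₂) (hR₂ : IsGraph R₂) (hD : IsGraph D)
    (hb₁ : IsMorphism K₁ R₁ b₁) (hκ₁ : IsMorphism K₁ D κ₁) (hb₂ : IsMorphism K₂ R₂ b₂)
    (hκ₂ : IsMorphism K₂ D κ₂) (hb₁i : MorInjective K₁ b₁) (hκ₁i : MorInjective K₁ κ₁)
    (hb₂i : MorInjective K₂ b₂) (hκ₂i : MorInjective K₂ κ₂) :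
    ∃ (Vu Eu : Type) (U : PreGraph Vu Eu α β) (γ : PreMorph Vd Ed Vu Eu)
      (ρ₁ : PreMorph Vr₁ Er₁ Vu Eu) (ρ₂ : PreMorph Vr₂ Er₂ Vu Eu),
      IsGraph U ∧ IsMorphism D U γ ∧ IsMorphism R₁ U ρ₁ ∧ IsMorphism R₂ U ρ₂ ∧
      IsDoubleGluing D.nodes K₁.nodes R₁.nodes K₂.nodes R₂.nodes U.nodes
        κ₁.fv b₁.fv κ₂.fv b₂.fv γ.fv ρ₁.fv ρ₂.fv ∧
      IsDoubleGluing D.edges K₁.edges R₁.edges K₂.edges R₂.edges U.edges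
        κ₁.fe b₁.fe κ₂.fe b₂.fe γ.fe ρ₁.fe ρ₂.fe ∧
      (Nonempty Vu → Nonempty Vr₁ ∨ Nonempty Vr₂ ∨ Nonempty Vd) ∧
      (Nonempty Eu → Nonempty Er₁ ∨ Nonempty Er₂ ∨ Nonempty Ed) := by
  have hC : IsGraph (pushoutGraph K₁ R₁ D b₁ κ₁) := isGraph_pushoutGraph hK₁ hR₁ hD hb₁ hκ₁ hb₁i
  have hκ₂' : IsMorphism K₂ (pushoutGraph K₁ R₁ D b₁ κ₁) (comp (pushoutInr Vr₁ Er₁ Vd Ed) κ₂) :=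
    isMorphism_comp hκ₂ isMorphism_pushoutInr
  have hκ₂'i : MorInjective K₂ (comp (pushoutInr Vr₁ Er₁ Vd Ed) κ₂) :=
    morInjective_comp hκ₂i ⟨Sum.inr_injective.injOn, Sum.inr_injective.injOn⟩ hκ₂
  refine ⟨_, _, pushoutGraph K₂ R₂ _ b₂ (comp (pushoutInr Vr₁ Er₁ Vd Ed) κ₂),
    comp (pushoutInr _ _ _ _) (pushoutInr _ _ _ _), comp (pushoutInr _ _ _ _) (pushoutInl K₁ b₁ κ₁),
    pushoutInl K₂ b₂ _, isGraph_pushoutGraph hK₂ hR₂ hC hb₂ hκ₂' hb₂i,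
    isMorphism_comp isMorphism_pushoutInr isMorphism_pushoutInr,
    isMorphism_comp (isMorphism_pushoutInl hK₁ hb₁ hκ₁ hb₁i) isMorphism_pushoutInr,
    isMorphism_pushoutInl hK₂ hb₂ hκ₂' hb₂i,
    (isSetPushout_pushoutGraph_nodes hb₁ hκ₁ hb₁i hκ₁i).isDoubleGluing
      (isSetPushout_pushoutGraph_nodes hb₂ hκ₂' hb₂i hκ₂'i) hκ₂.mapsTo_nodes,
    (isSetPushout_pushoutGraph_edges hb₁ hκ₁ hb₁i hκ₁i).isDoubleGluing
      (isSetPushout_pushoutGraph_edges hb₂ hκ₂' hb₂i hκ₂'i) hκ₂.mapsTo_edges, ?_, ?_⟩ <;>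
  · rintro ⟨x | x | x⟩
    exacts [Or.inr (Or.inl ⟨x⟩), Or.inl ⟨x⟩, Or.inr (Or.inr ⟨x⟩)]

/-- Church-Rosser theorem. Parallel independent direct
derivations can be completed to a common graph `G'` by sequentially
independent direct derivations. -/
theorem church_rosser
    {Vl1 El1 Vk1 Ek1 Vr1 Er1 Vl2 El2 Vk2 Ek2 Vr2 Er2
     Vg Eg Vd1 Ed1 Vh1 Eh1 Vd2 Ed2 Vh2 Eh2 α β : Type}
    (L1 : PreGraph Vl1 El1 α β) (K1 : PreGraph Vk1 Ek1 α β)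
    (R1 : PreGraph Vr1 Er1 α β)
    (L2 : PreGraph Vl2 El2 α β) (K2 : PreGraph Vk2 Ek2 α β)
    (R2 : PreGraph Vr2 Er2 α β)
    (G : PreGraph Vg Eg α β)
    (D1 : PreGraph Vd1 Ed1 α β) (H1 : PreGraph Vh1 Eh1 α β)
    (D2 : PreGraph Vd2 Ed2 α β) (H2 : PreGraph Vh2 Eh2 α β)
    (bl1 : PreMorph Vk1 Ek1 Vl1 El1) (br1 : PreMorph Vk1 Ek1 Vr1 Er1)
    (bl2 : PreMorph Vk2 Ek2 Vl2 El2) (br2 : PreMorph Vk2 Ek2 Vr2 Er2)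
    (m1 : PreMorph Vl1 El1 Vg Eg) (k1 : PreMorph Vk1 Ek1 Vd1 Ed1)
    (d1G : PreMorph Vd1 Ed1 Vg Eg) (d1H : PreMorph Vd1 Ed1 Vh1 Eh1)
    (r1 : PreMorph Vr1 Er1 Vh1 Eh1)
    (m2 : PreMorph Vl2 El2 Vg Eg) (k2 : PreMorph Vk2 Ek2 Vd2 Ed2)
    (d2G : PreMorph Vd2 Ed2 Vg Eg) (d2H : PreMorph Vd2 Ed2 Vh2 Eh2)
    (r2 : PreMorph Vr2 Er2 Vh2 Eh2)
    (hL1 : IsGraph L1) (hK1 : IsGraph K1) (hR1 : IsGraph R1)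
    (hL2 : IsGraph L2) (hK2 : IsGraph K2) (hR2 : IsGraph R2)
    (hG : IsGraph G) (hD1 : IsGraph D1) (hH1 : IsGraph H1)
    (hD2 : IsGraph D2) (hH2 : IsGraph H2)
    (hbl1 : MorInjective K1 bl1) (hbr1 : MorInjective K1 br1)
    (hbl2 : MorInjective K2 bl2) (hbr2 : MorInjective K2 br2)
    (hm1 : MorInjective L1 m1) (hm2 : MorInjective L2 m2)
    (dd1 : IsDirectDerivation L1 K1 R1 G D1 H1 bl1 br1 m1 k1 d1G d1H r1)
    (dd2 : IsDirectDerivation L2 K2 R2 G D2 H2 bl2 br2 m2 k2 d2G d2H r2)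
    -- parallel independence
    (hpi : ∃ (j1 : PreMorph Vl1 El1 Vd2 Ed2) (j2 : PreMorph Vl2 El2 Vd1 Ed1),
        IsMorphism L1 D2 j1 ∧ IsMorphism L2 D1 j2 ∧
        MorEq L1 (comp d2G j1) m1 ∧ MorEq L2 (comp d1G j2) m2) :
    ∃ (Vg' Eg' Vc1 Ec1 Vc2 Ec2 : Type)
      (G' : PreGraph Vg' Eg' α β)
      (C2 : PreGraph Vc2 Ec2 α β) (C1 : PreGraph Vc1 Ec1 α β)
      (m2' : PreMorph Vl2 El2 Vh1 Eh1) (k2' : PreMorph Vk2 Ek2 Vc2 Ec2)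
      (c2H : PreMorph Vc2 Ec2 Vh1 Eh1) (c2G : PreMorph Vc2 Ec2 Vg' Eg')
      (r2' : PreMorph Vr2 Er2 Vg' Eg')
      (m1' : PreMorph Vl1 El1 Vh2 Eh2) (k1' : PreMorph Vk1 Ek1 Vc1 Ec1)
      (c1H : PreMorph Vc1 Ec1 Vh2 Eh2) (c1G : PreMorph Vc1 Ec1 Vg' Eg')
      (r1' : PreMorph Vr1 Er1 Vg' Eg'),
      IsGraph G' ∧ IsGraph C1 ∧ IsGraph C2 ∧
      MorInjective L2 m2' ∧ MorInjective L1 m1' ∧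
      IsDirectDerivation L2 K2 R2 H1 C2 G' bl2 br2 m2' k2' c2H c2G r2' ∧
      IsDirectDerivation L1 K1 R1 H2 C1 G' bl1 br1 m1' k1' c1H c1G r1' ∧
      -- sequential independence of G ⇒_{p1,m1} H1 ⇒_{p2,m2'} G'
      (∃ (s1 : PreMorph Vr1 Er1 Vc2 Ec2) (s2 : PreMorph Vl2 El2 Vd1 Ed1),
        IsMorphism R1 C2 s1 ∧ IsMorphism L2 D1 s2 ∧
        MorEq R1 (comp c2H s1) r1 ∧ MorEq L2 (comp d1H s2) m2') ∧
      -- sequential independence of G ⇒_{p2,m2} H2 ⇒_{p1,m1'} G'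
      (∃ (s1 : PreMorph Vr2 Er2 Vc1 Ec1) (s2 : PreMorph Vl1 El1 Vd2 Ed2),
        IsMorphism R2 C1 s1 ∧ IsMorphism L1 D2 s2 ∧
        MorEq R2 (comp c1H s1) r2 ∧ MorEq L1 (comp d2H s2) m1') := by
  obtain ⟨j1, j2, hj1, hj2, hj1m, hj2m⟩ := hpi
  have hk1 := dd1.1.morInjective_right hbl1 hm1
  have hk2 := dd2.1.morInjective_right hbl2 hm2
  have hD := isGraph_pullbackGraph hD1 hD2 dd1.1.2.2.2.1 dd2.1.2.2.2.1
  have hκ1 : IsMorphism K1 (pullbackGraph D1 D2 d1G d2G) (pullbackLift k1 (comp j1 bl1)) :=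
    isMorphism_pullbackLift dd1.1.2.1 (isMorphism_comp dd1.1.1 hj1)
      (dd1.1.2.2.2.2.1.symm.trans (hj1m.comp_right dd1.1.1).symm)
  have hκ2 : IsMorphism K2 (pullbackGraph D1 D2 d1G d2G) (pullbackLift (comp j2 bl2) k2) :=
    isMorphism_pullbackLift (isMorphism_comp dd2.1.1 hj2) dd2.1.2.1
      ((hj2m.comp_right dd2.1.1).trans dd2.1.2.2.2.2.1)
  obtain ⟨Vu, Eu, U, γ, ρ1, ρ2, hU, hγ, hρ1, hρ2, hUv, hUe, hUvn, hUen⟩ :=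
    exists_isDoubleGluing hK1 hR1 hK2 hR2 hD dd1.2.1 hκ1 dd2.2.1 hκ2 hbr1
      (morInjective_pullbackLift_left hk1 _) hbr2 (morInjective_pullbackLift_right _ hk2)
  obtain ⟨c2H, c2G, hC2, hm2', dd2', si1⟩ :=
    exists_isDirectDerivation_of_parallelIndependent (π₂ := pullbackSnd _ _ _ _) hL1 hK1 hR1
      hL2 hK2 hR2 hG hD1 hH1 hD2 hD hU hbl1 hbr1 hm1 hbl2 hbr2 hm2 dd1 dd2.1 dd2.2.1 hj1 hj2
      hj1m hj2m isMorphism_pullbackFst isSetPullback_pullbackGraph_nodes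
      isSetPullback_pullbackGraph_edges (fun ⟨a⟩ ⟨b⟩ => ⟨(a, b)⟩) (fun ⟨a⟩ ⟨b⟩ => ⟨(a, b)⟩)
      hκ1 ⟨fun _ _ => rfl, fun _ _ => rfl⟩ hκ2 ⟨fun _ _ => rfl, fun _ _ => rfl⟩
      hγ hρ1 hρ2 hUv hUe hUvn hUen
  obtain ⟨c1H, c1G, hC1, hm1', dd1', si2⟩ :=
    exists_isDirectDerivation_of_parallelIndependent (π₂ := pullbackFst _ _ _ _) hL2 hK2 hR2
      hL1 hK1 hR1 hG hD2 hH2 hD1 hD hU hbl2 hbr2 hm2 hbl1 hbr1 hm1 dd2 dd1.1 dd1.2.1 hj2 hj1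
      hj2m hj1m (isMorphism_pullbackSnd dd1.1.2.2.2.1 dd2.1.2.2.2.1)
      isSetPullback_pullbackGraph_nodes.symm isSetPullback_pullbackGraph_edges.symm
      (fun ⟨b⟩ ⟨a⟩ => ⟨(a, b)⟩) (fun ⟨b⟩ ⟨a⟩ => ⟨(a, b)⟩)
      hκ2 ⟨fun _ _ => rfl, fun _ _ => rfl⟩ hκ1 ⟨fun _ _ => rfl, fun _ _ => rfl⟩
      hγ hρ2 hρ1 hUv.symm hUe.symm
      (fun h => or_left_comm.1 (hUvn h)) (fun h => or_left_comm.1 (hUen h))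
  exact ⟨_, _, _, _, _, _, U, _, _, _, _, c2H, c2G, ρ2, _, _, c1H, c1G, ρ1, hU, hC1, hC2, hm2',
    hm1', dd2', dd1', si1, si2⟩
end
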